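/- arXiv:2302.11153 — 12 statements merged into one kernel-verified Lean document; each statement's English description precedes it below -/
import Mathlib

section
/- Let X be a complex Banach space and x ∈ S_X. Then x is a Δ-point if and only if for every slice S of B_X containing x and every ε > 0, there exists y ∈ S with ‖x − y‖ ≥ 2 − ε. -/
/-- In a complex Banach space, `x ∈ S_X` is a Δ-point iff for
every slice of `B_X` containing `x` and every `ε > 0` there is `y` in the slice
with `‖x - y‖ ≥ 2 - ε`. -/
theorem stmt1 {X : Type*} [NormedAddCommGroup X] [NormedSpace ℂ X]
    [CompleteSpace X] (x : X) (hx : ‖x‖ = 1) :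
    (∀ ε > (0 : ℝ),
        x ∈ closure (convexHull ℝ {y : X | ‖y‖ ≤ 1 ∧ 2 - ε ≤ ‖x - y‖})) ↔
    (∀ (xs : X →L[ℂ] ℂ), ‖xs‖ = 1 → ∀ α > (0 : ℝ),
        (‖x‖ ≤ 1 ∧ 1 - α < (xs x).re) → ∀ ε > (0 : ℝ),
        ∃ y : X, (‖y‖ ≤ 1 ∧ 1 - α < (xs y).re) ∧ 2 - ε ≤ ‖x - y‖) := by
  constructor
  · -- Δ-point → slice condition
    intro hΔ xs hxs α hα hxslice ε hε
    set β := (xs x).re - (1 - α) with hβdef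
    have hβ : 0 < β := by simp only [hβdef]; linarith [hxslice.2]
    have hmem := hΔ ε hε
    rw [Metric.mem_closure_iff] at hmem
    obtain ⟨z, hz, hdz⟩ := hmem β hβ
    -- Re xs z > 1 - α
    have hre : |(xs x).re - (xs z).re| ≤ ‖x - z‖ := by
      have h1 : (xs x).re - (xs z).re = (xs (x - z)).re := by
        simp [map_sub]
      rw [h1]
      calc |(xs (x - z)).re| ≤ ‖xs (x - z)‖ := Complex.abs_re_le_norm _
        _ ≤ ‖xs‖ * ‖x - z‖ := xs.le_opNorm _
        _ = ‖x - z‖ := by rw [hxs, one_mul]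
    have hdz' : ‖x - z‖ < β := by rwa [← dist_eq_norm]
    have hzre : 1 - α < (xs z).re := by
      have := abs_lt.mp (lt_of_le_of_lt hre hdz')
      simp only [hβdef] at this
      linarith [this.1, this.2]
    -- maximum principle: find y in the set with Re xs y ≥ Re xs z
    have hconv : ConvexOn ℝ (Set.univ : Set X) (fun y => (xs y).re) := by
      refine ⟨convex_univ, fun a _ b _ p q hp hq hpq => ?_⟩
      simp only [map_add, map_smul, Complex.add_re, Complex.real_smul,
        Complex.mul_re, Complex.ofReal_re, Complex.ofReal_im]
      ring_nf
      simp
      linarith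
    obtain ⟨y, hy, hle⟩ := hconv.exists_ge_of_mem_convexHull
      (Set.subset_univ _) hz
    exact ⟨y, ⟨hy.1, lt_of_lt_of_le hzre hle⟩, hy.2⟩
  · -- slice condition → Δ-point
    intro hsl ε hε
    by_contra hnot
    set C := closure (convexHull ℝ {y : X | ‖y‖ ≤ 1 ∧ 2 - ε ≤ ‖x - y‖}) with hC
    have hCconv : Convex ℝ C := (convex_convexHull ℝ _).closure
    obtain ⟨f, u, hfu, hux⟩ := geometric_hahn_banach_closed_point hCconv
      isClosed_closure hnot
    have hmemC : -x ∈ C := by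
      apply subset_closure
      apply subset_convexHull
      constructor
      · rw [norm_neg, hx]
      · have : ‖x - -x‖ = 2 := by
          rw [sub_neg_eq_add, ← two_smul ℝ x, norm_smul, hx]
          simp
        rw [this]; linarith
    have hfnorm : 0 < ‖f‖ := by
      rcases eq_or_lt_of_le (norm_nonneg f) with h | h
      · exfalso
        have hf0 : f = 0 := by rwa [eq_comm, norm_eq_zero] at h
        have h1 := hfu _ hmemC
        rw [hf0] at h1 hux
        simp at h1 hux
        linarith
      · exact h
    have hux' : u < ‖f‖ := by
      calc u < f x := hux
        _ ≤ ‖f‖ * ‖x‖ := le_trans (le_abs_self _) (f.le_opNorm x)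
        _ = ‖f‖ := by rw [hx, mul_one]
    -- extend to complex functional
    set g : X →L[ℂ] ℂ := f.extendTo𝕜' with hg
    have hgnorm : ‖g‖ = ‖f‖ := f.norm_extendTo𝕜'
    have hgre : ∀ y : X, (g y).re = f y := fun y => by
      have h := LinearMap.extendTo𝕜'_apply_re (𝕜 := ℂ) f.toLinearMap y
      rw [RCLike.re_to_complex] at h
      exact h
    set xs : X →L[ℂ] ℂ := (‖f‖⁻¹ : ℂ) • g with hxsdef
    have hxsnorm : ‖xs‖ = 1 := by
      have h := norm_smul (α := ℂ) (β := X →L[ℂ] ℂ) ((‖f‖ : ℂ))⁻¹ g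
      rw [hxsdef, h, hgnorm]
      simp only [norm_inv, Complex.norm_real, Real.norm_eq_abs,
        abs_of_pos hfnorm]
      exact inv_mul_cancel₀ hfnorm.ne'
    have hxsre : ∀ y : X, (xs y).re = ‖f‖⁻¹ * f y := by
      intro y
      have h1 : xs y = ((‖f‖ : ℂ))⁻¹ * g y := rfl
      rw [h1, ← Complex.ofReal_inv, Complex.re_ofReal_mul, hgre y]
    set α : ℝ := 1 - u / ‖f‖ with hαdef
    have hα : 0 < α := by
      rw [hαdef]
      have : u / ‖f‖ < 1 := (div_lt_one hfnorm).mpr hux'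
      linarith
    have hxin : ‖x‖ ≤ 1 ∧ 1 - α < (xs x).re := by
      refine ⟨le_of_eq hx, ?_⟩
      rw [hxsre, hαdef]
      have : u / ‖f‖ < ‖f‖⁻¹ * f x := by
        rw [div_eq_inv_mul]
        exact (mul_lt_mul_iff_right₀ (inv_pos.mpr hfnorm)).mpr hux
      linarith
    obtain ⟨y, ⟨hy1, hy2⟩, hy3⟩ := hsl xs hxsnorm α hα hxin ε hε
    -- y ∈ Δ_ε ⊆ C, so f y < u, contradicting hy2
    have hyC : y ∈ C := subset_closure (subset_convexHull ℝ _ ⟨hy1, hy3⟩)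
    have hfy : f y < u := hfu y hyC
    rw [hxsre] at hy2
    have : ‖f‖⁻¹ * f y < ‖f‖⁻¹ * u :=
      (mul_lt_mul_iff_right₀ (inv_pos.mpr hfnorm)).mpr hfy
    rw [hαdef, div_eq_inv_mul] at hy2
    linarith
end

section
/- Let X be a complex Banach space and x ∈ S_X. If for every rank-one projection P = x* ⊗ x with x*(x) = 1 one has ‖I − P‖ ≥ 2, then for every slice S of B_X containing x and every ε > 0 there exists y ∈ S with ‖x − y‖ ≥ 2 − ε. -/
set_option maxHeartbeats 1000000
set_option synthInstance.maxHeartbeats 400000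


/-- If every rank-one projection `P = x* ⊗ x` with `x*(x) = 1`
satisfies `‖I - P‖ ≥ 2`, then for every slice of `B_X` containing `x` and every
`ε > 0` there is `y` in the slice with `‖x - y‖ ≥ 2 - ε`. -/
theorem stmt2 {X : Type*} [NormedAddCommGroup X] [NormedSpace ℂ X]
    [CompleteSpace X] (x : X) (hx : ‖x‖ = 1)
    (hproj : ∀ xs : X →L[ℂ] ℂ, xs x = 1 →
      2 ≤ ‖ContinuousLinearMap.id ℂ X - xs.smulRight x‖) :
    ∀ (xs : X →L[ℂ] ℂ), ‖xs‖ = 1 → ∀ α > (0 : ℝ),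
      (‖x‖ ≤ 1 ∧ 1 - α < (xs x).re) → ∀ ε > (0 : ℝ),
      ∃ y : X, (‖y‖ ≤ 1 ∧ 1 - α < (xs y).re) ∧ 2 - ε ≤ ‖x - y‖ := by
  intro xs hxs α hα hmem ε hε
  obtain ⟨hx1, hslice⟩ := hmem
  rcases le_or_gt 2 ε with h2ε | h2ε
  · refine ⟨x, ⟨hx1, hslice⟩, ?_⟩
    rw [sub_self, norm_zero]; linarith
  have hx0 : x ≠ 0 := by
    intro h; rw [h, norm_zero] at hx; norm_num at hx
  obtain ⟨g, hg, hgx⟩ := exists_dual_vector ℂ x (norm_ne_zero_iff.mpr hx0)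
  rw [hx] at hgx
  have hgx1 : g x = 1 := by rw [hgx]; norm_num
  set c : ℂ := xs x with hc
  have hcnorm : ‖c‖ ≤ 1 := by
    calc ‖c‖ = ‖xs x‖ := rfl
      _ ≤ ‖xs‖ * ‖x‖ := xs.le_opNorm x
      _ = 1 := by rw [hxs, hx, mul_one]
  have hcre : -1 ≤ c.re ∧ c.re ≤ 1 := by
    have h1 : |c.re| ≤ ‖c‖ := by
      exact Complex.abs_re_le_norm c
    have h2 := abs_le.mp (le_trans h1 hcnorm)
    exact ⟨h2.1, h2.2⟩
  set β : ℝ := c.re - (1 - α) with hβdef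
  have hβ : 0 < β := by rw [hβdef]; linarith
  set N : ℝ := max 2 (1 + 8 / ε) with hN
  have hN2 : 2 ≤ N := le_max_left _ _
  have hNε : 1 + 8 / ε ≤ N := le_max_right _ _
  set δ : ℝ := min (ε / 4) (β / (2 * (N + 1))) with hδdef
  have hδ0 : 0 < δ := lt_min (by linarith) (by positivity)
  have hδε : δ ≤ ε / 4 := min_le_left _ _
  have hδβ : δ * (N + 1) ≤ β / 2 := by
    have h := min_le_right (ε / 4) (β / (2 * (N + 1)))
    rw [← hδdef] at h
    have hN1 : (0:ℝ) < N + 1 := by linarith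
    calc δ * (N + 1) ≤ β / (2 * (N + 1)) * (N + 1) := by nlinarith
      _ = β / 2 := by field_simp
  have hδ1 : δ < 1 := by linarith
  -- the perturbed functional
  have hdre : (0:ℝ) < c.re + N := by linarith [hcre.1]
  have hdne : c + (N : ℂ) ≠ 0 := by
    intro h
    have : (c + (N : ℂ)).re = 0 := by rw [h]; simp
    simp [Complex.add_re] at this
    linarith
  set F : X →L[ℂ] ℂ := (c + (N : ℂ))⁻¹ • (xs + (N : ℂ) • g) with hF
  have hFapp : ∀ w : X, F w = (c + (N : ℂ))⁻¹ * (xs w + (N : ℂ) * g w) := by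
    intro w; simp [hF]; ring
  have hFx : F x = 1 := by
    rw [hFapp, hgx1, ← hc]
    field_simp
  have hdnorm : N - 1 ≤ ‖c + (N : ℂ)‖ := by
    have h1 : (c + (N : ℂ)).re ≤ ‖c + (N : ℂ)‖ := Complex.re_le_norm _
    have h2 : (c + (N : ℂ)).re = c.re + N := by simp [Complex.add_re]
    linarith [hcre.1]
  have hFnorm : ‖F‖ ≤ (N + 1) / (N - 1) := by
    have h1 : ‖F‖ ≤ ‖(c + (N : ℂ))⁻¹‖ * ‖xs + (N : ℂ) • g‖ := by
      rw [hF]; exact ContinuousLinearMap.opNorm_smul_le _ _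
    have h2 : ‖xs + (N : ℂ) • g‖ ≤ 1 + N := by
      have h2a : ‖(N : ℂ) • g‖ ≤ ‖(N : ℂ)‖ * ‖g‖ := ContinuousLinearMap.opNorm_smul_le _ _
      have h2b : ‖(N : ℂ)‖ = N := by
        rw [Complex.norm_real, Real.norm_eq_abs, abs_of_pos (by linarith : (0:ℝ) < N)]
      calc ‖xs + (N : ℂ) • g‖ ≤ ‖xs‖ + ‖(N : ℂ) • g‖ := norm_add_le _ _
        _ ≤ 1 + N := by rw [hxs]; rw [h2b, hg, mul_one] at h2a; linarith
    have h3 : ‖(c + (N : ℂ))⁻¹‖ = ‖c + (N : ℂ)‖⁻¹ := norm_inv _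
    have h4 : (0:ℝ) < ‖c + (N : ℂ)‖ := by linarith
    have h5 : ‖(c + (N : ℂ))⁻¹‖ ≤ (N - 1)⁻¹ := by
      rw [h3]
      exact inv_anti₀ (by linarith) hdnorm
    calc ‖F‖ ≤ ‖(c + (N : ℂ))⁻¹‖ * ‖xs + (N : ℂ) • g‖ := h1
      _ ≤ (N - 1)⁻¹ * (1 + N) := by
          apply mul_le_mul h5 h2 (norm_nonneg _) (inv_nonneg.mpr (by linarith))
      _ = (N + 1) / (N - 1) := by field_simp; ring
  have hP := hproj F hFx
  obtain ⟨z, hz1, hz2⟩ := ContinuousLinearMap.exists_lt_apply_of_lt_opNorm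
    (ContinuousLinearMap.id ℂ X - F.smulRight x)
    (lt_of_lt_of_le (by linarith : (2:ℝ) - δ < 2) hP)
  set μ : ℂ := F z with hμdef
  have hL : 2 - δ < ‖z - μ • x‖ := by
    have : (ContinuousLinearMap.id ℂ X - F.smulRight x) z = z - μ • x := by
      simp [ContinuousLinearMap.sub_apply, ContinuousLinearMap.smulRight_apply]; rfl
    rwa [this] at hz2
  have hμlb : 1 - δ < ‖μ‖ := by
    have h1 : ‖z - μ • x‖ ≤ ‖z‖ + ‖μ‖ := by
      calc ‖z - μ • x‖ ≤ ‖z‖ + ‖μ • x‖ := norm_sub_le _ _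
        _ = ‖z‖ + ‖μ‖ := by rw [norm_smul, hx, mul_one]
    linarith
  have hμ0 : μ ≠ 0 := by
    intro h; rw [h, norm_zero] at hμlb; linarith
  have hμpos : 0 < ‖μ‖ := by linarith
  have hμub : ‖μ‖ ≤ (N + 1) / (N - 1) := by
    calc ‖μ‖ = ‖F z‖ := rfl
      _ ≤ ‖F‖ * ‖z‖ := F.le_opNorm z
      _ ≤ ((N + 1) / (N - 1)) * 1 := by
          apply mul_le_mul hFnorm (le_of_lt hz1) (norm_nonneg _) (div_nonneg (by linarith) (by linarith))
      _ = (N + 1) / (N - 1) := mul_one _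
  set t : ℝ := min ‖μ‖ 1 with ht
  have ht0 : 1 - δ < t := lt_min hμlb (by linarith)
  have ht1 : t ≤ 1 := min_le_right _ _
  have htμ : t ≤ ‖μ‖ := min_le_left _ _
  have htpos : 0 < t := by linarith
  have htC : ((t : ℂ)) ≠ 0 := by
    simpa using ne_of_gt htpos
  set y : X := ((t : ℂ) / μ) • z with hy
  have hcoef : ‖(t : ℂ) / μ‖ = t / ‖μ‖ := by
    rw [norm_div, Complex.norm_real, Real.norm_eq_abs, abs_of_pos htpos]
  have hyn : ‖y‖ ≤ 1 := by
    rw [hy, norm_smul, hcoef]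
    have : t / ‖μ‖ ≤ 1 := by
      rw [div_le_one hμpos]; exact htμ
    nlinarith [norm_nonneg z]
  have hFy : F y = (t : ℂ) := by
    rw [hy, map_smul, ← hμdef, smul_eq_mul, div_mul_cancel₀ _ hμ0]
  have hxsy : xs y = (c + (N : ℂ)) * (t : ℂ) - (N : ℂ) * g y := by
    have h1 : F y = (c + (N : ℂ))⁻¹ * (xs y + (N : ℂ) * g y) := hFapp y
    rw [hFy] at h1
    field_simp at h1
    linear_combination -h1
  have hgy : (g y).re ≤ 1 := by
    have h1 : ‖g y‖ ≤ 1 := by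
      calc ‖g y‖ ≤ ‖g‖ * ‖y‖ := g.le_opNorm y
        _ ≤ 1 := by rw [hg, one_mul]; exact hyn
    exact le_trans (Complex.re_le_norm _) h1
  have hslicey : 1 - α < (xs y).re := by
    have hre : (xs y).re = (c.re + N) * t - N * (g y).re := by
      rw [hxsy]
      simp [Complex.sub_re, Complex.mul_re, Complex.add_re, Complex.add_im,
        Complex.ofReal_re, Complex.ofReal_im]
    rw [hre]
    have m1 : (1 - δ) * (c.re + N) ≤ t * (c.re + N) :=
      mul_le_mul_of_nonneg_right (le_of_lt ht0) (le_of_lt hdre)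
    have m2 : N * (g y).re ≤ N * 1 :=
      mul_le_mul_of_nonneg_left hgy (by linarith)
    have m3 : δ * (c.re + N) ≤ δ * (N + 1) :=
      mul_le_mul_of_nonneg_left (by linarith [hcre.2]) (le_of_lt hδ0)
    linarith [m1, m2, m3, hδβ, hβ, hslice]
  -- distance estimate
  have hμne : ‖μ‖ ≠ 0 := ne_of_gt hμpos
  have hμne' : ‖μ‖ ≠ 0 := hμne
  have hxy : x - y = ((t : ℂ) / μ) • ((μ / (t : ℂ)) • x - z) := by
    have hone : ((t : ℂ) / μ) * (μ / (t : ℂ)) = 1 := by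
      field_simp
    rw [hy, smul_sub, smul_smul, hone, one_smul]
  have hAlb : 2 - δ - ‖μ‖ * (1 / t - 1) ≤ ‖(μ / (t : ℂ)) • x - z‖ := by
    have h1 : z - μ • x = (μ / (t : ℂ) - μ) • x - ((μ / (t : ℂ)) • x - z) := by
      rw [sub_smul]; abel
    have h2 : ‖(μ / (t : ℂ) - μ) • x‖ = ‖μ‖ * (1 / t - 1) := by
      rw [norm_smul, hx, mul_one]
      have : μ / (t : ℂ) - μ = μ * ((1 : ℂ) / (t : ℂ) - 1) := by ring
      rw [this, norm_mul]
      congr 1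
      have h3 : ((1 : ℂ) / (t : ℂ) - 1) = (((1 / t - 1 : ℝ)) : ℂ) := by
        push_cast; ring
      rw [h3, Complex.norm_real, Real.norm_eq_abs, abs_of_nonneg]
      have : 1 ≤ 1 / t := by
        rw [le_div_iff₀ htpos]; linarith
      linarith
    have h4 : ‖z - μ • x‖ ≤ ‖(μ / (t : ℂ) - μ) • x‖ + ‖(μ / (t : ℂ)) • x - z‖ := by
      rw [h1]; exact norm_sub_le _ _
    rw [h2] at h4
    linarith
  have hnormxy : ‖x - y‖ = (t / ‖μ‖) * ‖(μ / (t : ℂ)) • x - z‖ := by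
    rw [hxy, norm_smul, hcoef]
  refine ⟨y, ⟨hyn, hslicey⟩, ?_⟩
  rcases le_or_gt ‖μ‖ 1 with hm | hm
  · -- t = ‖μ‖
    have htm : t = ‖μ‖ := min_eq_left hm
    have h5 : ‖μ‖ * (1 / t - 1) = 1 - ‖μ‖ := by
      rw [htm]; field_simp [hμne, hμne']
    have h6 : (2 - δ) - (1 - ‖μ‖) ≤ ‖(μ / (t : ℂ)) • x - z‖ := by
      rw [← h5]; exact hAlb
    have h7 : t / ‖μ‖ = 1 := by rw [htm]; exact div_self hμne
    rw [hnormxy, h7, one_mul]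
    have : 1 - ‖μ‖ < δ := by linarith
    linarith
  · -- t = 1
    have htm : t = 1 := min_eq_right (le_of_lt hm)
    have h5 : ‖μ‖ * (1 / t - 1) = 0 := by rw [htm]; simp
    have h6 : 2 - δ ≤ ‖(μ / (t : ℂ)) • x - z‖ := by
      have := hAlb; rw [h5] at this; linarith
    have hxyμ : ‖x - y‖ * ‖μ‖ = ‖(μ / (t : ℂ)) • x - z‖ := by
      rw [hnormxy, htm]
      field_simp [hμne, hμne']
    -- key numeric inequality
    have hεN : ε + 8 ≤ N * ε := by
      have h8 : (1 + 8 / ε) * ε = ε + 8 := by field_simp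
      have h9 := mul_le_mul_of_nonneg_right hNε (le_of_lt hε)
      linarith [h8, h9]
    have hkey : (2 - ε) * (N + 1) ≤ (2 - δ) * (N - 1) := by
      have m := mul_le_mul_of_nonneg_right hδε (show (0:ℝ) ≤ N by linarith)
      linarith [hεN, m, hδ0.le]
    have hμN : ‖μ‖ * (N - 1) ≤ N + 1 :=
      (le_div_iff₀ (show (0:ℝ) < N - 1 by linarith)).mp hμub
    have p1 : (2 - ε) * (‖μ‖ * (N - 1)) ≤ (2 - ε) * (N + 1) :=
      mul_le_mul_of_nonneg_left hμN (by linarith : (0:ℝ) ≤ 2 - ε)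
    have p2 : ((2 - ε) * ‖μ‖) * (N - 1) ≤ (2 - δ) * (N - 1) := by
      linarith [p1, hkey]
    have h9 : (2 - ε) * ‖μ‖ ≤ 2 - δ :=
      le_of_mul_le_mul_right p2 (show (0:ℝ) < N - 1 by linarith)
    have h10 : 2 - δ ≤ ‖x - y‖ * ‖μ‖ := by rw [hxyμ]; linarith
    have h11 : (2 - ε) * ‖μ‖ ≤ ‖x - y‖ * ‖μ‖ := by linarith
    exact le_of_mul_le_mul_right h11 hμpos
end

section
/- Let X be a complex Banach space, x ∈ S_X, and x* ∈ X* with x*(x) = 1. If the real-linear operator T' = (Re x*/‖x*‖) ⊗ x satisfies ‖I − T'‖ = 2, then the complex-linear operator T = (x*/‖x*‖) ⊗ x satisfies ‖I − T‖ = 2. -/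
set_option maxHeartbeats 800000 in
/-- If the real-linear operator `T' = (Re x*/‖x*‖) ⊗ x` satisfies
`‖I - T'‖ = 2`, then the complex-linear operator `T = (x*/‖x*‖) ⊗ x` satisfies
`‖I - T‖ = 2`. -/
theorem stmt5 {X : Type*} [NormedAddCommGroup X] [NormedSpace ℂ X]
    [CompleteSpace X] (x : X) (hx : ‖x‖ = 1)
    (xs : X →L[ℂ] ℂ) (hxs : xs x = 1)
    (hT' : ‖ContinuousLinearMap.id ℝ X -
        ((‖xs‖⁻¹ • (Complex.reCLM.comp (xs.restrictScalars ℝ))).smulRight x)‖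
        = 2) :
    ‖ContinuousLinearMap.id ℂ X - (((‖xs‖⁻¹ : ℝ) • xs).smulRight x)‖ = 2 := by
  set f := ContinuousLinearMap.id ℝ X -
      ((‖xs‖⁻¹ • (Complex.reCLM.comp (xs.restrictScalars ℝ))).smulRight x) with hf
  set g := ContinuousLinearMap.id ℂ X - (((‖xs‖⁻¹ : ℝ) • xs).smulRight x) with hg
  have hxs1 : (1:ℝ) ≤ ‖xs‖ := by
    have := xs.unit_le_opNorm x hx.le
    simpa [hxs] using this
  have hxspos : (0:ℝ) < ‖xs‖ := lt_of_lt_of_le one_pos hxs1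
  -- upper bound
  have hub : ‖g‖ ≤ 2 := by
    have h1 : ‖(((‖xs‖⁻¹ : ℝ) • xs).smulRight x)‖ = 1 := by
      rw [ContinuousLinearMap.norm_smulRight_apply, norm_smul, hx]
      simp [abs_of_nonneg (inv_nonneg.mpr hxspos.le), inv_mul_cancel₀ hxspos.ne']
    calc ‖g‖ ≤ ‖ContinuousLinearMap.id ℂ X‖ + ‖(((‖xs‖⁻¹ : ℝ) • xs).smulRight x)‖ :=
          norm_sub_le _ _
      _ ≤ 1 + 1 := by
          gcongr
          · exact ContinuousLinearMap.norm_id_le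
          · exact h1.le
      _ = 2 := by norm_num
  -- lower bound
  have hlb : (2:ℝ) ≤ ‖g‖ := by
    refine le_of_forall_pos_le_add fun δ hδ => ?_
    set δ' : ℝ := min δ 1 with hδ'
    have hδ'0 : 0 < δ' := lt_min hδ one_pos
    have hδ'1 : δ' ≤ 1 := min_le_right _ _
    set ε : ℝ := min (δ'/2) (δ'^2/8) with hε
    have hε0 : 0 < ε := lt_min (by linarith) (by positivity)
    have hεδ : ε ≤ δ'/2 := min_le_left _ _
    have hεq : ε ≤ δ'^2/8 := min_le_right _ _
    have h2ε : 2 - ε < ‖f‖ := by rw [hT']; linarith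
    obtain ⟨y, hy1, hyf⟩ := f.exists_lt_apply_of_lt_opNorm h2ε
    set lam : ℂ := (‖xs‖⁻¹ : ℝ) • xs y with hlam
    have hfy : f y = y - lam.re • x := by
      simp [hf, hlam, Complex.smul_re, ContinuousLinearMap.smul_apply]
    have hgy : g y = y - lam • x := by
      simp [hg, hlam, ContinuousLinearMap.smul_apply]
    -- |lam| ≤ 1
    have hlamle : ‖lam‖ ≤ 1 := by
      rw [hlam, norm_smul]
      have : ‖xs y‖ ≤ ‖xs‖ := by
        have := xs.le_opNorm y
        nlinarith [norm_nonneg (xs y), hy1.le, xs.le_opNorm y]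
      calc ‖(‖xs‖⁻¹ : ℝ)‖ * ‖xs y‖ ≤ ‖xs‖⁻¹ * ‖xs‖ := by
            rw [Real.norm_eq_abs, abs_of_nonneg (inv_nonneg.mpr hxspos.le)]
            gcongr
        _ = 1 := inv_mul_cancel₀ hxspos.ne'
    -- |lam.re| ≥ ‖f y‖ - 1
    have hre : ‖f y‖ - 1 ≤ |lam.re| := by
      have : ‖f y‖ ≤ ‖y‖ + |lam.re| * ‖x‖ := by
        rw [hfy]
        calc ‖y - lam.re • x‖ ≤ ‖y‖ + ‖lam.re • x‖ := norm_sub_le _ _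
          _ = ‖y‖ + |lam.re| * ‖x‖ := by rw [norm_smul, Real.norm_eq_abs]
      rw [hx] at this
      nlinarith [hy1.le]
    have hfy2 : 2 - ε ≤ ‖f y‖ := hyf.le
    have hε1 : ε ≤ 1/2 := le_trans hεδ (by linarith)
    have hre1 : 1 - ε ≤ |lam.re| := by linarith
    -- lam.im bound
    have him : |lam.im| ≤ δ'/2 := by
      have hsq : lam.re^2 + lam.im^2 ≤ 1 := by
        have := Complex.sq_norm lam
        have h1 : ‖lam‖ ≤ 1 := hlamle
        nlinarith [Complex.normSq_apply lam, Complex.sq_norm lam, norm_nonneg lam]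
      have him2 : lam.im^2 ≤ 2*ε - ε^2 := by nlinarith [sq_abs lam.re, hre1]
      have h2e : 2*ε - ε^2 ≤ (δ'/2)^2 := by nlinarith [sq_nonneg ε, sq_nonneg δ', hδ'0.le]
      have h3 : lam.im^2 ≤ (δ'/2)^2 := le_trans him2 h2e
      nlinarith [sq_abs lam.im, abs_nonneg lam.im, hδ'0.le]
    -- ‖f y‖ ≤ ‖g y‖ + |lam.im|
    have hkey : ‖f y‖ ≤ ‖g y‖ + |lam.im| := by
      have hdiff : f y = g y + (lam - (lam.re : ℂ)) • x := by
        rw [hfy, hgy]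
        rw [sub_smul]
        have : (lam.re : ℂ) • x = lam.re • x := by
          simp [Complex.coe_smul]
        rw [this]; abel
      calc ‖f y‖ = ‖g y + (lam - (lam.re : ℂ)) • x‖ := by rw [hdiff]
        _ ≤ ‖g y‖ + ‖(lam - (lam.re : ℂ)) • x‖ := norm_add_le _ _
        _ = ‖g y‖ + |lam.im| := by
            rw [norm_smul, hx, mul_one]
            congr 1
            have : lam - (lam.re : ℂ) = lam.im * Complex.I := by
              rw [Complex.ext_iff]; simp
            rw [this, norm_mul]
            simp [Complex.norm_real]
    have hgyle : ‖g y‖ ≤ ‖g‖ := by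
      have := g.le_opNorm y
      nlinarith [norm_nonneg g, hy1.le]
    have : 2 - ε - δ'/2 ≤ ‖g‖ := by linarith
    have hδ'δ : δ' ≤ δ := min_le_left _ _
    linarith
  linarith
end

section
/- Let X be a complex Banach space, x ∈ S_X and x* ∈ X* with x*(x) = 1 = ‖x*‖. Then the complex rank-one projection P = x* ⊗ x satisfies ‖I − P‖ = 2 if and only if the real-linear projection P' = Re x* ⊗ x satisfies ‖I − P'‖ = 2. -/
set_option maxHeartbeats 1000000 in
/-- For `x ∈ S_X` and `x* ∈ X*` with `x*(x) = 1 = ‖x*‖`, the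
complex rank-one projection `P = x* ⊗ x` satisfies `‖I - P‖ = 2` iff the
real-linear projection `P' = Re x* ⊗ x` satisfies `‖I - P'‖ = 2`. -/
theorem stmt6 {X : Type*} [NormedAddCommGroup X] [NormedSpace ℂ X]
    [CompleteSpace X] (x : X) (hx : ‖x‖ = 1)
    (xs : X →L[ℂ] ℂ) (hxs : xs x = 1) (hxsn : ‖xs‖ = 1) :
    ‖ContinuousLinearMap.id ℂ X - xs.smulRight x‖ = 2 ↔
    ‖ContinuousLinearMap.id ℝ X -
      ((Complex.reCLM.comp (xs.restrictScalars ℝ)).smulRight x)‖ = 2 := by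
  set T : X →L[ℂ] X := ContinuousLinearMap.id ℂ X - xs.smulRight x with hTdef
  set T' : X →L[ℝ] X := ContinuousLinearMap.id ℝ X -
      ((Complex.reCLM.comp (xs.restrictScalars ℝ)).smulRight x) with hT'def
  have hTapp : ∀ y : X, T y = y - xs y • x := by
    intro y; simp [hTdef]
  have hT'app : ∀ y : X, T' y = y - (xs y).re • x := by
    intro y; simp [hT'def]
  have habs : ∀ y : X, ‖xs y‖ ≤ ‖y‖ := by
    intro y
    have := xs.le_opNorm y
    rwa [hxsn, one_mul] at this
  have hre : ∀ y : X, |(xs y).re| ≤ ‖y‖ :=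
    fun y => (Complex.abs_re_le_norm (xs y)).trans (habs y)
  -- smul coercion
  have hsmul : ∀ (a : ℝ) (z : X), (a : ℂ) • z = a • z := by
    intro a z
    rw [Complex.coe_smul]
  -- Lemma A : ‖T'‖ ≤ 2
  have hA : ‖T'‖ ≤ 2 := by
    refine ContinuousLinearMap.opNorm_le_bound _ (by norm_num) fun y => ?_
    rw [hT'app]
    calc ‖y - (xs y).re • x‖ ≤ ‖y‖ + ‖(xs y).re • x‖ := norm_sub_le _ _
      _ = ‖y‖ + |(xs y).re| * ‖x‖ := by rw [norm_smul, Real.norm_eq_abs]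
      _ ≤ 2 * ‖y‖ := by
          have := hre y
          rw [hx, mul_one]
          linarith
  -- Lemma B : ‖T‖ ≤ ‖T'‖
  have hB : ‖T‖ ≤ ‖T'‖ := by
    refine ContinuousLinearMap.opNorm_le_bound _ (norm_nonneg _) fun y => ?_
    by_cases hc : xs y = 0
    · have h1 : T y = y := by rw [hTapp, hc, zero_smul, sub_zero]
      have h2 : T' y = y := by rw [hT'app, hc, Complex.zero_re, zero_smul, sub_zero]
      calc ‖T y‖ = ‖T' y‖ := by rw [h1, h2]
        _ ≤ ‖T'‖ * ‖y‖ := T'.le_opNorm y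
    · set c := xs y with hcdef
      have hc0 : ‖c‖ ≠ 0 := fun h => hc (norm_eq_zero.mp h)
      set u : ℂ := ((‖c‖ : ℝ) : ℂ) / c with hudef
      have huc : u * c = ((‖c‖ : ℝ) : ℂ) := by
        rw [hudef, div_mul_cancel₀ _ hc]
      have hu1 : ‖u‖ = 1 := by
        rw [hudef, norm_div, Complex.norm_real, Real.norm_eq_abs,
          abs_of_nonneg (norm_nonneg _),
          div_self hc0]
      have hz : T' (u • y) = u • T y := by
        rw [hT'app, hTapp]
        have hxz : xs (u • y) = u * c := by rw [map_smul, smul_eq_mul, hcdef]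
        rw [hxz, huc, Complex.ofReal_re, smul_sub, ← hsmul, ← huc, mul_smul]
      have : ‖T y‖ = ‖T' (u • y)‖ := by
        rw [hz, norm_smul, hu1, one_mul]
      rw [this]
      calc ‖T' (u • y)‖ ≤ ‖T'‖ * ‖u • y‖ := T'.le_opNorm _
        _ = ‖T'‖ * ‖y‖ := by rw [norm_smul, hu1, one_mul]
  constructor
  · intro h
    have : (2:ℝ) ≤ ‖T'‖ := h ▸ hB
    linarith
  · intro h
    have hTle : ‖T‖ ≤ 2 := hB.trans h.le
    refine le_antisymm hTle ?_
    by_contra hlt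
    push_neg at hlt
    set ε : ℝ := 2 - ‖T‖ with hεdef
    have hε : 0 < ε := by linarith
    have hε2 : ε ≤ 2 := by
      have := norm_nonneg T; linarith
    set s : ℝ := Real.sqrt (1 - ε ^ 2 / 4) with hsdef
    have hs0 : 0 ≤ s := Real.sqrt_nonneg _
    have hs1 : s < 1 := by
      rw [hsdef, Real.sqrt_lt' one_pos]
      nlinarith
    set M : ℝ := max (2 - ε / 2) (1 + s) with hMdef
    have hM2 : M < 2 := by
      rw [hMdef, max_lt_iff]
      constructor <;> linarith
    have hMpos : (0:ℝ) ≤ M := by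
      refine le_trans ?_ (le_max_left _ _); linarith
    have hkey : ‖T'‖ ≤ M := by
      refine ContinuousLinearMap.opNorm_le_bound _ hMpos fun y => ?_
      set a : ℝ := (xs y).re with hadef
      set b : ℝ := (xs y).im with hbdef
      have hab : a ^ 2 + b ^ 2 ≤ ‖y‖ ^ 2 := by
        have h1 := habs y
        have h2 : ‖xs y‖ ^ 2 = a ^ 2 + b ^ 2 := by
          rw [Complex.sq_norm, Complex.normSq_apply, hadef, hbdef]; ring
        nlinarith [norm_nonneg (xs y)]
      rcases le_or_gt |b| (ε / 2 * ‖y‖) with hb | hb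
      · -- ‖T' y‖ ≤ ‖T y‖ + |b|
        have hbI : (a : ℂ) = xs y - (b : ℂ) * Complex.I := by
          rw [hadef, hbdef]
          linear_combination Complex.re_add_im (xs y)
        have hdiff : T' y = T y + ((b : ℂ) * Complex.I) • x := by
          rw [hT'app, hTapp, ← hsmul, hbI]
          module
        calc ‖T' y‖ ≤ ‖T y‖ + ‖((b : ℂ) * Complex.I) • x‖ := by
              rw [hdiff]; exact norm_add_le _ _
          _ = ‖T y‖ + |b| * ‖x‖ := by
              rw [norm_smul, norm_mul, Complex.norm_I, Complex.norm_real,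
                Real.norm_eq_abs, mul_one]
          _ ≤ ‖T‖ * ‖y‖ + ε / 2 * ‖y‖ := by
              have h1 := T.le_opNorm y
              have h2 : |b| * ‖x‖ ≤ ε / 2 * ‖y‖ := by rw [hx, mul_one]; exact hb
              exact add_le_add h1 h2
          _ = (2 - ε / 2) * ‖y‖ := by rw [hεdef]; ring
          _ ≤ M * ‖y‖ :=
              mul_le_mul_of_nonneg_right (le_max_left _ _) (norm_nonneg y)
      · -- |a| ≤ s * ‖y‖
        have hb2 : (ε / 2 * ‖y‖) ^ 2 < b ^ 2 := by
          have h0 : (0:ℝ) ≤ ε / 2 * ‖y‖ := by positivity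
          nlinarith [sq_abs b, abs_nonneg b]
        have h1 : a ^ 2 ≤ (1 - ε ^ 2 / 4) * ‖y‖ ^ 2 := by nlinarith
        have ha : |a| ≤ s * ‖y‖ := by
          rcases le_or_gt (1 - ε ^ 2 / 4) 0 with h0 | h0
          · have ha0 : a = 0 := by nlinarith [sq_nonneg a, sq_nonneg ‖y‖]
            rw [ha0, abs_zero]
            positivity
          · rw [← Real.sqrt_sq_eq_abs]
            calc Real.sqrt (a ^ 2) ≤ Real.sqrt ((1 - ε ^ 2 / 4) * ‖y‖ ^ 2) :=
                  Real.sqrt_le_sqrt h1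
              _ = s * ‖y‖ := by
                  rw [Real.sqrt_mul h0.le, Real.sqrt_sq (norm_nonneg y), hsdef]
        calc ‖T' y‖ ≤ ‖y‖ + |a| * ‖x‖ := by
              rw [hT'app]
              calc ‖y - a • x‖ ≤ ‖y‖ + ‖a • x‖ := norm_sub_le _ _
                _ = ‖y‖ + |a| * ‖x‖ := by rw [norm_smul, Real.norm_eq_abs]
          _ ≤ ‖y‖ + s * ‖y‖ := by
              have h2 : |a| * ‖x‖ ≤ s * ‖y‖ := by rw [hx, mul_one]; exact ha
              linarith
          _ = (1 + s) * ‖y‖ := by ring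
          _ ≤ M * ‖y‖ :=
              mul_le_mul_of_nonneg_right (le_max_right _ _) (norm_nonneg y)
    rw [h] at hkey
    linarith
end

section
/- Let X be a complex Banach space and x ∈ S_X. Then x is a Daugavet point if and only if every rank-one operator T = x* ⊗ x with ‖T‖ = 1 (where x* ∈ X*) satisfies ‖I − T‖ = 2. -/
private lemma halfspace_bound {X : Type*} [NormedAddCommGroup X] [NormedSpace ℝ X]
    {S : Set X} {f : X →L[ℝ] ℝ} {c : ℝ} (h : ∀ z ∈ S, f z ≤ c) :
    ∀ y ∈ closure (convexHull ℝ S), f y ≤ c := by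
  have hconv : Convex ℝ {z : X | f z ≤ c} :=
    convex_halfSpace_le ⟨map_add f, map_smul f⟩ c
  have hclosed : IsClosed {z : X | f z ≤ c} :=
    isClosed_le f.continuous continuous_const
  intro y hy
  exact closure_minimal (convexHull_min h hconv) hclosed hy

private lemma norm_sub_one_sq (a : ℂ) : ‖a - 1‖^2 = ‖a‖^2 - 2*a.re + 1 := by
  rw [Complex.sq_norm, Complex.sq_norm,
    Complex.normSq_sub]
  simp [Complex.normSq_apply]
  ring

private lemma norm_sub_one_le {a : ℂ} {t : ℝ} (ht : 0 ≤ t) (ha : ‖a‖ ≤ 1)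
    (hre : 1 - t^2/2 ≤ a.re) : ‖a - 1‖ ≤ t := by
  have h1 : ‖a - 1‖^2 ≤ t^2 := by
    have := norm_sub_one_sq a
    nlinarith [norm_nonneg a]
  nlinarith [norm_nonneg (a - 1)]

/-- `x ∈ S_X` is a Daugavet point iff every rank-one operator
`T = x* ⊗ x` with `‖T‖ = 1` satisfies `‖I - T‖ = 2`. -/
theorem stmt7 {X : Type*} [NormedAddCommGroup X] [NormedSpace ℂ X]
    [CompleteSpace X] (x : X) (hx : ‖x‖ = 1) :
    (∀ ε > (0 : ℝ),
        closure (convexHull ℝ {y : X | ‖y‖ ≤ 1 ∧ 2 - ε ≤ ‖x - y‖})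
          = Metric.closedBall (0 : X) 1) ↔
    (∀ xs : X →L[ℂ] ℂ, ‖xs.smulRight x‖ = 1 →
        ‖ContinuousLinearMap.id ℂ X - xs.smulRight x‖ = 2) := by
  constructor
  · -- Daugavet point → norm identity
    intro h xs hT
    have hn : ‖xs‖ = 1 := by
      have h1 := ContinuousLinearMap.norm_smulRight_apply xs x
      rw [hx, mul_one] at h1
      rw [← h1, hT]
    set T := xs.smulRight x with hTdef
    have hupper : ‖ContinuousLinearMap.id ℂ X - T‖ ≤ 2 := by
      calc ‖ContinuousLinearMap.id ℂ X - T‖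
          ≤ ‖ContinuousLinearMap.id ℂ X‖ + ‖T‖ := norm_sub_le _ _
        _ ≤ 1 + 1 := add_le_add ContinuousLinearMap.norm_id_le (le_of_eq hT)
        _ = 2 := by norm_num
    refine le_antisymm hupper (le_of_forall_pos_le_add ?_)
    intro η hη
    set δ : ℝ := min ((η/2)^2/2) (1/2) with hδdef
    have hδpos : 0 < δ := lt_min (by positivity) (by norm_num)
    have hδle : δ ≤ (η/2)^2/2 := min_le_left _ _
    have hδhalf : δ ≤ 1/2 := min_le_right _ _
    obtain ⟨y₀, hy₀, hfy₀⟩ := xs.exists_lt_apply_of_lt_opNorm (r := 1 - δ)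
      (by rw [hn]; linarith)
    have ha₀ : xs y₀ ≠ 0 := by
      intro h0
      rw [h0, norm_zero] at hfy₀
      linarith
    have hnorm0 : (‖xs y₀‖ : ℂ) ≠ 0 := by
      exact_mod_cast norm_ne_zero_iff.mpr ha₀
    set c0 : ℂ := (starRingEnd ℂ) (xs y₀) / (‖xs y₀‖ : ℂ) with hc0def
    set y : X := c0 • y₀ with hydef
    have hc0norm : ‖c0‖ = 1 := by
      rw [hc0def, norm_div, RCLike.norm_conj, Complex.norm_real, Real.norm_eq_abs,
        abs_of_nonneg (norm_nonneg _), div_self (norm_ne_zero_iff.mpr ha₀)]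
    have hxsy : xs y = (‖xs y₀‖ : ℂ) := by
      rw [hydef, map_smul, smul_eq_mul, hc0def, div_mul_eq_mul_div, Complex.conj_mul',
        sq, mul_div_assoc, div_self hnorm0, mul_one]
    have hynorm : ‖y‖ ≤ 1 := by
      rw [hydef, norm_smul, hc0norm, one_mul]; exact hy₀.le
    set Δ : Set X := {y : X | ‖y‖ ≤ 1 ∧ 2 - η/2 ≤ ‖x - y‖} with hΔdef
    have hyball : y ∈ closure (convexHull ℝ Δ) := by
      rw [h (η/2) (by positivity)]
      exact mem_closedBall_zero_iff.mpr hynorm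
    have hslice : ∃ z ∈ Δ, 1 - δ < (xs z).re := by
      by_contra hcon
      push_neg at hcon
      set f : X →L[ℝ] ℝ := Complex.reCLM.comp (xs.restrictScalars ℝ) with hfdef
      have hb : ∀ z ∈ Δ, f z ≤ 1 - δ := fun z hz => hcon z hz
      have hbd := halfspace_bound hb y hyball
      have hfy : f y = ‖xs y₀‖ := by
        simp [hfdef, hxsy]
      rw [hfy] at hbd
      linarith
    obtain ⟨z, ⟨hz1, hz2⟩, hz3⟩ := hslice
    have hazle : ‖xs z‖ ≤ 1 := by
      have h1 := xs.le_opNorm z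
      rw [hn, one_mul] at h1
      exact h1.trans hz1
    have hsub : ‖xs z - 1‖ ≤ η/2 := by
      refine norm_sub_one_le (by positivity) hazle ?_
      linarith
    have happly : (ContinuousLinearMap.id ℂ X - T) z = z - (xs z) • x := by
      simp [hTdef]
    have hlow : 2 - η ≤ ‖(ContinuousLinearMap.id ℂ X - T) z‖ := by
      rw [happly]
      have htri : ‖z - x‖ ≤ ‖z - (xs z) • x‖ + ‖(xs z) • x - x‖ :=
        norm_sub_le_norm_sub_add_norm_sub _ _ _
      have h4 : ‖(xs z) • x - x‖ = ‖xs z - 1‖ := by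
        rw [show (xs z) • x - x = (xs z - 1) • x by rw [sub_smul, one_smul],
          norm_smul, hx, mul_one]
      have h5 : 2 - η/2 ≤ ‖z - x‖ := by rwa [norm_sub_rev] at hz2
      rw [h4] at htri
      linarith
    have h6 : ‖(ContinuousLinearMap.id ℂ X - T) z‖ ≤ ‖ContinuousLinearMap.id ℂ X - T‖ := by
      calc ‖(ContinuousLinearMap.id ℂ X - T) z‖
          ≤ ‖ContinuousLinearMap.id ℂ X - T‖ * ‖z‖ :=
            (ContinuousLinearMap.id ℂ X - T).le_opNorm z
        _ ≤ ‖ContinuousLinearMap.id ℂ X - T‖ * 1 :=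
            mul_le_mul_of_nonneg_left hz1 (norm_nonneg _)
        _ = _ := mul_one _
    linarith
  · -- norm identity → Daugavet point
    intro h ε hε
    set Δ : Set X := {y : X | ‖y‖ ≤ 1 ∧ 2 - ε ≤ ‖x - y‖} with hΔdef
    apply Set.Subset.antisymm
    · refine closure_minimal (convexHull_min ?_ (convex_closedBall 0 1))
        Metric.isClosed_closedBall
      intro y hy
      exact mem_closedBall_zero_iff.mpr hy.1
    · intro p hp
      by_contra hpC
      have hCconv : Convex ℝ (closure (convexHull ℝ Δ)) := (convex_convexHull ℝ Δ).closure
      obtain ⟨f, u, hfC, hup⟩ :=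
        geometric_hahn_banach_closed_point hCconv isClosed_closure hpC
      have hnegx : -x ∈ closure (convexHull ℝ Δ) := by
        apply subset_closure
        apply subset_convexHull
        constructor
        · rw [norm_neg, hx]
        · have hxx : x - (-x) = (2:ℝ) • x := by
            rw [two_smul, sub_neg_eq_add]
          rw [hxx, norm_smul, hx, mul_one, Real.norm_eq_abs, abs_of_nonneg (by norm_num)]
          linarith
      have hfpos : 0 < ‖f‖ := by
        rw [norm_pos_iff]
        intro h0
        have h1 := hfC _ hnegx
        rw [h0] at h1 hup
        simp at h1 hup
        linarith
      set g : X →L[ℂ] ℂ := f.extendTo𝕜' with hgdef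
      have hre : ∀ z : X, (g z).re = f z := by
        intro z
        rw [hgdef, ContinuousLinearMap.extendTo𝕜', ContinuousLinearMap.extendTo𝕜'_apply]
        simp
      have hgnorm : ‖g‖ = ‖f‖ := ContinuousLinearMap.norm_extendTo𝕜' f
      set xs : X →L[ℂ] ℂ := ((‖f‖⁻¹ : ℝ) : ℂ) • g with hxsdef
      have hxsnorm : ‖xs‖ = 1 := by
        have hns := norm_smul ((‖f‖⁻¹ : ℝ) : ℂ) g
        rw [hxsdef, hns, Complex.norm_real, Real.norm_eq_abs,
          abs_of_nonneg (by positivity), hgnorm, inv_mul_cancel₀ hfpos.ne']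
      have hxsre : ∀ z : X, (xs z).re = ‖f‖⁻¹ * f z := by
        intro z
        have h1 : xs z = ((‖f‖⁻¹ : ℝ) : ℂ) * g z := rfl
        rw [h1, Complex.mul_re]
        simp [hre z]
      have hT : ‖xs.smulRight x‖ = 1 := by
        rw [ContinuousLinearMap.norm_smulRight_apply, hx, mul_one, hxsnorm]
      have h2 := h xs hT
      have hfple : f p ≤ ‖f‖ := by
        have h1 : f p ≤ |f p| := le_abs_self _
        have h2' : |f p| ≤ ‖f‖ * ‖p‖ := f.le_opNorm p
        have h3 : ‖p‖ ≤ 1 := mem_closedBall_zero_iff.mp hp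
        nlinarith
      have hult : u < ‖f‖ := lt_of_lt_of_le hup hfple
      set δ : ℝ := 1 - u / ‖f‖ with hδdef
      clear_value δ
      have hδpos : 0 < δ := by
        have : u / ‖f‖ < 1 := (div_lt_one hfpos).mpr hult
        linarith
      set η : ℝ := min δ (min ε 1) / 2 with hηdef
      clear_value η
      have hmin1 : min δ (min ε 1) ≤ δ := min_le_left _ _
      have hmin2 : min δ (min ε 1) ≤ ε := le_trans (min_le_right _ _) (min_le_left _ _)
      have hmin3 : min δ (min ε 1) ≤ 1 := le_trans (min_le_right _ _) (min_le_right _ _)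
      have hηpos : 0 < η := by
        rw [hηdef]
        apply div_pos _ (by norm_num)
        exact lt_min hδpos (lt_min hε (by norm_num))
      have hηδ : η < δ := by rw [hηdef]; linarith
      have h2η : 2 * η ≤ ε := by rw [hηdef]; linarith
      have hη1 : η < 1 := by rw [hηdef]; linarith
      have hslicebound : ∀ b ∈ Δ, (xs b).re < 1 - δ := by
        intro b hb
        have hfb : f b < u := hfC b (subset_closure (subset_convexHull ℝ Δ hb))
        have hiu : ‖f‖⁻¹ * u = u / ‖f‖ := (inv_mul_eq_div _ _)
        have hmul := mul_lt_mul_of_pos_left hfb (inv_pos.mpr hfpos)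
        rw [hxsre b, hδdef]
        linarith
      have hlt : (2 : ℝ) - η < ‖ContinuousLinearMap.id ℂ X - xs.smulRight x‖ := by
        rw [h2]; linarith
      obtain ⟨z, hz1, hz2⟩ :=
        (ContinuousLinearMap.id ℂ X - xs.smulRight x).exists_lt_apply_of_lt_opNorm hlt
      rw [show (ContinuousLinearMap.id ℂ X - xs.smulRight x) z = z - (xs z) • x by simp] at hz2
      set a : ℂ := xs z with hadef
      have hanorm : 1 - η < ‖a‖ := by
        have htri : ‖z - a • x‖ ≤ ‖z‖ + ‖a • x‖ := norm_sub_le _ _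
        rw [norm_smul, hx, mul_one] at htri
        linarith
      have ha0 : a ≠ 0 := by
        intro h0; rw [h0, norm_zero] at hanorm; linarith
      have hnorma0 : (‖a‖ : ℂ) ≠ 0 := by exact_mod_cast norm_ne_zero_iff.mpr ha0
      set c0 : ℂ := (starRingEnd ℂ) a / (‖a‖ : ℂ) with hc0def
      have hc0norm : ‖c0‖ = 1 := by
        rw [hc0def, norm_div, RCLike.norm_conj, Complex.norm_real, Real.norm_eq_abs,
          abs_of_nonneg (norm_nonneg _), div_self (norm_ne_zero_iff.mpr ha0)]
      have hc0a : c0 * a = (‖a‖ : ℂ) := by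
        rw [hc0def, div_mul_eq_mul_div, Complex.conj_mul', sq, mul_div_assoc,
          div_self hnorma0, mul_one]
      set w : X := c0 • z with hwdef
      have hxsw : xs w = (‖a‖ : ℂ) := by
        rw [hwdef, map_smul, smul_eq_mul, ← hadef, hc0a]
      have hwnorm : ‖w‖ ≤ 1 := by
        rw [hwdef, norm_smul, hc0norm, one_mul]; exact hz1.le
      have hwfar : 2 - η < ‖w - (‖a‖:ℂ) • x‖ := by
        have heq : w - (‖a‖:ℂ) • x = c0 • (z - a • x) := by
          rw [hwdef, smul_sub, smul_smul, hc0a]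
        rw [heq, norm_smul, hc0norm, one_mul]
        exact hz2
      have hanormle : ‖a‖ ≤ 1 := by
        have h1 := xs.le_opNorm z
        rw [hxsnorm, one_mul] at h1
        exact h1.trans hz1.le
      have hwx : 2 - ε ≤ ‖x - w‖ := by
        have htri : ‖w - (‖a‖:ℂ) • x‖ ≤ ‖w - x‖ + ‖x - (‖a‖:ℂ) • x‖ :=
          norm_sub_le_norm_sub_add_norm_sub _ _ _
        have h4 : ‖x - (‖a‖:ℂ) • x‖ = 1 - ‖a‖ := by
          rw [show x - (‖a‖:ℂ) • x = ((1:ℂ) - (‖a‖:ℂ)) • x by rw [sub_smul, one_smul],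
            norm_smul, hx, mul_one,
            show (1:ℂ) - (‖a‖:ℂ) = ((1 - ‖a‖ : ℝ) : ℂ) by push_cast; ring,
            Complex.norm_real, Real.norm_eq_abs, abs_of_nonneg (by linarith)]
        rw [norm_sub_rev]
        linarith
      have hcontra := hslicebound w ⟨hwnorm, hwx⟩
      rw [hxsw, Complex.ofReal_re] at hcontra
      linarith
end

section
/- Let X be a complex Banach space and x ∈ S_X be a Δ-point. Then for every ε > 0, every α > 0 with α/(1 − α) < ε, and every slice S(x*, α) of B_X containing x, there exists a slice S(z*, α₁) of B_X such that S(z*, α₁) ⊆ S(x*, α) and ‖x − y‖ > 2 − ε for all y ∈ S(z*, α₁). -/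
/-- Auxiliary: a point in the closed convex hull of `D` cannot be strictly above
every value of a continuous real-linear functional on `D`. -/
lemma stmt9_extract {X : Type*} [NormedAddCommGroup X] [NormedSpace ℝ X]
    (f : X →L[ℝ] ℝ) (D : Set X) (x : X) (c : ℝ)
    (hx : x ∈ closure (convexHull ℝ D)) (hc : c < f x) :
    ∃ y ∈ D, c < f y := by
  by_contra h
  push_neg at h
  have hD : D ⊆ {z | f z ≤ c} := fun z hz => h z hz
  have hconv : Convex ℝ {z | f z ≤ c} :=
    convex_halfSpace_le ⟨f.map_add, f.map_smul⟩ c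
  have hcl : IsClosed {z | f z ≤ c} :=
    isClosed_le f.continuous continuous_const
  have := closure_minimal (convexHull_min hD hconv) hcl hx
  exact absurd this (not_le.mpr hc)

set_option maxHeartbeats 1000000 in
set_option synthInstance.maxHeartbeats 400000 in
/-- If `x ∈ S_X` is a Δ-point then for every `ε > 0`, every
`α > 0` with `α/(1-α) < ε`, and every slice `S(x*, α)` containing `x`, there is
a slice `S(z*, α₁) ⊆ S(x*, α)` on which `‖x - y‖ > 2 - ε` for all its points. -/
theorem stmt9 {X : Type*} [NormedAddCommGroup X] [NormedSpace ℂ X]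
    [CompleteSpace X] (x : X) (hx : ‖x‖ = 1)
    (hΔ : ∀ ε > (0 : ℝ),
      x ∈ closure (convexHull ℝ {y : X | ‖y‖ ≤ 1 ∧ 2 - ε ≤ ‖x - y‖})) :
    ∀ ε > (0 : ℝ), ∀ α > (0 : ℝ), α / (1 - α) < ε →
    ∀ (xs : X →L[ℂ] ℂ), ‖xs‖ = 1 → (‖x‖ ≤ 1 ∧ 1 - α < (xs x).re) →
    ∃ (zs : X →L[ℂ] ℂ) (α₁ : ℝ), ‖zs‖ = 1 ∧ 0 < α₁ ∧
      (∀ y : X, (‖y‖ ≤ 1 ∧ 1 - α₁ < (zs y).re) →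
        (‖y‖ ≤ 1 ∧ 1 - α < (xs y).re)) ∧
      (∀ y : X, (‖y‖ ≤ 1 ∧ 1 - α₁ < (zs y).re) → 2 - ε < ‖x - y‖) := by
  intro ε hε α hα _hαε xs hxs hxmem
  obtain ⟨hx1, hxα⟩ := hxmem
  -- helper : real parts of values of norm-one functionals on the ball
  have reb : ∀ (f : X →L[ℂ] ℂ), ‖f‖ = 1 → ∀ w : X, ‖w‖ ≤ 1 → |(f w).re| ≤ 1 := by
    intro f hf w hw
    calc |(f w).re| ≤ ‖f w‖ := Complex.abs_re_le_norm _
    _ ≤ ‖f‖ * ‖w‖ := f.le_opNorm w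
    _ ≤ 1 := by rw [hf]; linarith
  -- constants
  obtain ⟨m, hm, hxxre⟩ : ∃ m : ℝ, 0 < m ∧ (xs x).re = 1 - α + 2 * m :=
    ⟨((xs x).re - (1 - α)) / 2, by linarith, by ring⟩
  obtain ⟨e, he, he1, heε⟩ : ∃ e : ℝ, 0 < e ∧ e ≤ 1 ∧ e ≤ ε :=
    ⟨min ε 1, lt_min hε one_pos, min_le_right _ _, min_le_left _ _⟩
  have hden : (0:ℝ) < e + 8 * α := by linarith
  obtain ⟨lam, mu, hlam, hmu, hsum, hkey⟩ :
      ∃ lam mu : ℝ, 0 < lam ∧ 0 < mu ∧ lam + mu = 1 ∧ lam * α = e / 8 * mu := by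
    refine ⟨e / (e + 8 * α), 1 - e / (e + 8 * α), div_pos he hden, ?_, by ring, ?_⟩
    · have : e / (e + 8 * α) < 1 := by rw [div_lt_one hden]; linarith
      linarith
    · field_simp
      ring
  have hmu1 : mu ≤ 1 := by linarith
  have hlamα : lam * α ≤ e / 8 := by nlinarith [hkey, he, hmu1]
  have hlamm : 0 < lam * m := mul_pos hlam hm
  obtain ⟨δ, hδ, hδ1, hδ2⟩ : ∃ δ : ℝ, 0 < δ ∧ δ ≤ lam * m / 2 ∧ δ ≤ e / 8 :=
    ⟨min (lam * m / 2) (e / 8),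
      lt_min (by linarith) (by linarith), min_le_left _ _, min_le_right _ _⟩
  obtain ⟨β, hβ, hβ1, hβ2⟩ : ∃ β : ℝ, 0 < β ∧ β ≤ lam * m / 2 ∧ β ≤ mu * e / 4 :=
    ⟨min (lam * m / 2) (mu * e / 4),
      lt_min (by linarith) (by nlinarith [mul_pos hmu he]),
      min_le_left _ _, min_le_right _ _⟩
  -- extract a far point y inside the slice
  have hDx := hΔ δ hδ
  set f : X →L[ℝ] ℝ := Complex.reCLM.comp (xs.restrictScalars ℝ) with hf_def
  have hfx : ∀ w : X, f w = (xs w).re := fun w => rfl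
  obtain ⟨y, hyD, hyre⟩ := stmt9_extract f _ x ((xs x).re - m) hDx
    (by rw [hfx]; linarith)
  obtain ⟨hy1, hyt⟩ := hyD
  rw [hfx] at hyre
  have hyre' : 1 - α + m < (xs y).re := by linarith
  set t : ℝ := ‖x - y‖ with ht_def
  have ht2 : 2 - δ ≤ t := hyt
  have htpos : 0 < t := by linarith
  have hxy : x - y ≠ 0 := norm_pos_iff.mp (ht_def ▸ htpos)
  obtain ⟨g, hg1, hgxy⟩ := exists_dual_vector ℂ (x - y) (norm_ne_zero_iff.mpr hxy)
  have hgre : (g x).re - (g y).re = t := by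
    have := congrArg Complex.re hgxy
    simpa [map_sub, Complex.sub_re] using this
  have hgy : |(g y).re| ≤ 1 := reb g hg1 y hy1
  have hgx1 : |(g x).re| ≤ 1 := reb g hg1 x (le_of_eq hx)
  have hgx : t - 1 ≤ (g x).re := by
    have : -1 ≤ (g y).re := neg_le_of_abs_le hgy
    linarith
  -- the new functional
  set h : X →L[ℂ] ℂ := lam • xs - mu • g with hh_def
  have hhre : ∀ w : X, (h w).re = lam * (xs w).re - mu * (g w).re := by
    intro w
    simp [hh_def, Complex.real_smul, Complex.sub_re]
  set N : ℝ := ‖h‖ with hN_def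
  have hN1 : N ≤ 1 := by
    calc N ≤ ‖lam • xs‖ + ‖mu • g‖ := norm_sub_le _ _
    _ = |lam| * ‖xs‖ + |mu| * ‖g‖ := by
        rw [norm_smul (β := X →L[ℂ] ℂ) lam xs, norm_smul (β := X →L[ℂ] ℂ) mu g,
          Real.norm_eq_abs, Real.norm_eq_abs]
    _ = 1 := by rw [hxs, hg1, abs_of_pos hlam, abs_of_pos hmu]; linarith
  have hNlow : 1 - lam * α + lam * m - mu * δ ≤ N := by
    have h1 : (h y).re ≤ N := by
      calc (h y).re ≤ |(h y).re| := le_abs_self _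
      _ ≤ ‖h y‖ := Complex.abs_re_le_norm _
      _ ≤ ‖h‖ * ‖y‖ := h.le_opNorm y
      _ ≤ N := by
          have : ‖h‖ * ‖y‖ ≤ ‖h‖ * 1 :=
            mul_le_mul_of_nonneg_left hy1 (norm_nonneg _)
          simpa using this
    have h2 : (h y).re = lam * (xs y).re - mu * (g y).re := hhre y
    have h3 : (g y).re ≤ 1 - t := by
      have : (g x).re ≤ 1 := le_of_abs_le hgx1
      linarith
    have q1 : lam * (1 - α + m) ≤ lam * (xs y).re :=
      mul_le_mul_of_nonneg_left hyre'.le hlam.le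
    have q2 : mu * (g y).re ≤ mu * (1 - t) :=
      mul_le_mul_of_nonneg_left h3 hmu.le
    have q3 : mu * (2 - δ) ≤ mu * t :=
      mul_le_mul_of_nonneg_left ht2 hmu.le
    linarith only [h1, h2, q1, q2, q3, hsum]
  have hmuδ : mu * δ ≤ δ := by
    have := mul_le_mul_of_nonneg_right hmu1 hδ.le
    linarith
  have hNpos : 0 < N := by
    linarith only [hNlow, hlamα, hlamm, hmuδ, hδ2, he1]
  set zs : X →L[ℂ] ℂ := N⁻¹ • h with hzs_def
  have hzsnorm : ‖zs‖ = 1 := by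
    rw [hzs_def, norm_smul (β := X →L[ℂ] ℂ) N⁻¹ h, ← hN_def, Real.norm_eq_abs,
      abs_of_pos (inv_pos.mpr hNpos)]
    field_simp
  -- the two slice properties
  have key : ∀ z : X, ‖z‖ ≤ 1 → 1 - β < (zs z).re →
      (1 - α < (xs z).re ∧ 2 - ε < ‖x - z‖) := by
    intro z hz1 hz2
    have hzre : (zs z).re = N⁻¹ * (h z).re := by
      simp [hzs_def, Complex.real_smul]
    have hR : (1 - β) * N < (h z).re := by
      rw [hzre, inv_mul_eq_div] at hz2
      exact (lt_div_iff₀ hNpos).mp hz2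
    have s1 : N - β ≤ (1 - β) * N := by
      have p1 : 0 ≤ β * (1 - N) :=
        mul_nonneg hβ.le (by linarith only [hN1])
      linarith only [p1]
    have hhz : (h z).re = lam * (xs z).re - mu * (g z).re := hhre z
    have hgz : |(g z).re| ≤ 1 := reb g hg1 z hz1
    have hxsz : |(xs z).re| ≤ 1 := reb xs hxs z hz1
    have p2 : mu * (-1) ≤ mu * (g z).re :=
      mul_le_mul_of_nonneg_left (neg_le_of_abs_le hgz) hmu.le
    have p4 : lam * (xs z).re ≤ lam * 1 :=
      mul_le_mul_of_nonneg_left (le_of_abs_le hxsz) hlam.le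
    constructor
    · -- containment
      have s2 : lam * (1 - α) < lam * (xs z).re := by
        linarith only [hR, hhz, s1, hNlow, p2, hδ1, hβ1, hmuδ, hsum]
      exact lt_of_mul_lt_mul_left s2 hlam.le
    · -- distance
      have s3 : mu - lam * α - mu * δ - β < mu * (-(g z).re) := by
        linarith only [hR, hhz, s1, hNlow, p4, hlamm, hsum]
      have s4 : mu * (1 - e / 8 - δ - e / 4) < mu * (-(g z).re) := by
        linarith only [s3, hkey, hβ2]
      have s5 : 1 - e / 8 - δ - e / 4 < -(g z).re :=
        lt_of_mul_lt_mul_left s4 hmu.le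
      have s6 : (g (x - z)).re ≤ ‖x - z‖ := by
        calc (g (x - z)).re ≤ |(g (x - z)).re| := le_abs_self _
        _ ≤ ‖g (x - z)‖ := Complex.abs_re_le_norm _
        _ ≤ ‖g‖ * ‖x - z‖ := g.le_opNorm _
        _ = ‖x - z‖ := by rw [hg1, one_mul]
      have s7 : (g (x - z)).re = (g x).re - (g z).re := by
        simp [map_sub, Complex.sub_re]
      rw [s7] at s6
      linarith only [s5, s6, hgx, ht2, hδ2, heε, he]
  exact ⟨zs, β, hzsnorm, hβ, fun z hz => ⟨hz.1, (key z hz.1 hz.2).1⟩,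
    fun z hz => (key z hz.1 hz.2).2⟩
end

section
/- Let X be a real or complex Banach space. If x ∈ S_X is a locally uniformly nonsquare point, then x is not a Δ-point. -/
/-- A locally uniformly nonsquare point `x ∈ S_X` is not a
Δ-point. -/
theorem stmt10 {𝕜 : Type*} [RCLike 𝕜] {X : Type*} [NormedAddCommGroup X]
    [NormedSpace 𝕜 X] [NormedSpace ℝ X] [IsScalarTower ℝ 𝕜 X] [CompleteSpace X] (x : X) (hx : ‖x‖ = 1)
    (hlunsq : ∃ δ > (0 : ℝ), ∀ y : X, ‖y‖ = 1 →
      min ‖x + y‖ ‖x - y‖ ≤ 2 - δ) :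
    ¬ (∀ ε > (0 : ℝ),
      x ∈ closure (convexHull ℝ {y : X | ‖y‖ ≤ 1 ∧ 2 - ε ≤ ‖x - y‖})) := by
  obtain ⟨δ, hδ, hns⟩ := hlunsq
  intro hΔ
  have hδ2 : δ ≤ 2 := by
    have h := hns x hx
    rw [sub_self, norm_zero] at h
    have h0 : (0:ℝ) ≤ min ‖x + x‖ 0 := le_min (norm_nonneg _) le_rfl
    linarith
  set ε := δ / 4 with hεdef
  have hε : ε > 0 := by positivity
  have hεle : ε ≤ 1/2 := by rw [hεdef]; linarith
  have hS : {y : X | ‖y‖ ≤ 1 ∧ 2 - ε ≤ ‖x - y‖} ⊆ Metric.closedBall (-x) (2 - 3*δ/4) := by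
    rintro y ⟨hy1, hy2⟩
    rw [Metric.mem_closedBall, dist_eq_norm, sub_neg_eq_add, add_comm]
    have hy0 : 1 - ε ≤ ‖y‖ := by
      have := norm_sub_le x y
      linarith
    have hyne : y ≠ 0 := by
      intro h
      rw [h, norm_zero] at hy0
      linarith
    set z := ‖y‖⁻¹ • y with hzdef
    have hz : ‖z‖ = 1 := norm_smul_inv_norm hyne
    have hzy : ‖z - y‖ ≤ ε := by
      have : z - y = (‖y‖⁻¹ - 1) • y := by
        rw [sub_smul, one_smul, hzdef]
      rw [this, norm_smul, Real.norm_eq_abs]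
      have hpos : (0:ℝ) < ‖y‖ := norm_pos_iff.2 hyne
      rw [abs_of_nonneg (by rw [sub_nonneg]; exact (one_le_inv₀ hpos).2 hy1)]
      have : (‖y‖⁻¹ - 1) * ‖y‖ = 1 - ‖y‖ := by
        field_simp
      rw [this]
      linarith
    have hxz : 2 - 2*ε ≤ ‖x - z‖ := by
      have h1 : ‖x - y‖ ≤ ‖x - z‖ + ‖z - y‖ := by
        have : x - y = (x - z) + (z - y) := by abel
        rw [this]; exact norm_add_le _ _
      linarith
    have hmin := hns z hz
    have hxz2 : ‖x + z‖ ≤ 2 - δ := by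
      rcases min_le_iff.1 hmin with h | h
      · exact h
      · exfalso; rw [hεdef] at hxz; linarith
    have h2 : ‖x + y‖ ≤ ‖x + z‖ + ‖z - y‖ := by
      have : x + y = (x + z) - (z - y) := by abel
      rw [this]; exact norm_sub_le _ _
    rw [hεdef] at hzy
    linarith
  have hsub : closure (convexHull ℝ {y : X | ‖y‖ ≤ 1 ∧ 2 - ε ≤ ‖x - y‖}) ⊆
      Metric.closedBall (-x) (2 - 3*δ/4) := by
    apply closure_minimal _ Metric.isClosed_closedBall
    exact convexHull_min hS (convex_closedBall _ _)
  have hxmem := hsub (hΔ ε hε)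
  rw [Metric.mem_closedBall, dist_eq_norm, sub_neg_eq_add] at hxmem
  have : ‖x + x‖ = 2 := by
    have : x + x = (2:ℝ) • x := by
      rw [two_smul]
    rw [this, norm_smul, Real.norm_eq_abs, hx]
    norm_num
  linarith
end

section
/- Every locally uniformly nonsquare (real or complex) Banach space admits no Δ-points, and consequently does not have the diametral local diameter two property. -/
lemma stmt11_key {𝕜 : Type*} [RCLike 𝕜] {X : Type*} [NormedAddCommGroup X]
    [NormedSpace 𝕜 X] [NormedSpace ℝ X] [IsScalarTower ℝ 𝕜 X]
    {x : X} (hx : ‖x‖ = 1) {f : X →L[𝕜] 𝕜} (hf : ‖f‖ = 1)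
    {δ : ℝ} (hδ0 : 0 < δ) (hδ1 : δ ≤ 1)
    (hmin : ∀ z : X, ‖z‖ = 1 → min ‖x + z‖ ‖x - z‖ ≤ 2 - δ)
    {y : X} (hy : ‖y‖ ≤ 1) (hfy : 1 - δ / 3 < RCLike.re (f y))
    (hxy : 2 - δ / 3 ≤ ‖x - y‖) (hfx : RCLike.re (f x) = 1) : False := by
  have hre_le : ∀ z : X, RCLike.re (f z) ≤ ‖z‖ := fun z => by
    calc RCLike.re (f z) ≤ ‖f z‖ := RCLike.re_le_norm _
    _ ≤ ‖f‖ * ‖z‖ := f.le_opNorm z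
    _ = ‖z‖ := by rw [hf, one_mul]
  have hylb : 1 - δ / 3 < ‖y‖ := lt_of_lt_of_le hfy (hre_le y)
  have hypos : (0:ℝ) < ‖y‖ := by linarith
  set y' : X := ‖y‖⁻¹ • y with hy'def
  have hy'norm : ‖y'‖ = 1 := by
    rw [hy'def, norm_smul, Real.norm_eq_abs, abs_inv, abs_of_pos hypos,
      inv_mul_cancel₀ hypos.ne']
  have hdiff : ‖y - y'‖ < δ / 3 := by
    have : y - y' = (1 - ‖y‖⁻¹) • y := by rw [hy'def, sub_smul, one_smul]
    rw [this, norm_smul, Real.norm_eq_abs]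
    have h1 : (1:ℝ) ≤ ‖y‖⁻¹ := (one_le_inv₀ hypos).mpr hy
    rw [abs_of_nonpos (by linarith), neg_sub, sub_mul, inv_mul_cancel₀ hypos.ne', one_mul]
    linarith
  have hxpy : 2 - δ / 3 < ‖x + y‖ := by
    have : RCLike.re (f (x + y)) ≤ ‖x + y‖ := hre_le _
    rw [map_add, map_add, hfx] at this
    linarith
  have h1 : 2 - 2 * δ / 3 < ‖x + y'‖ := by
    have := norm_sub_norm_le (x + y) (x + y')
    have heq : (x + y) - (x + y') = y - y' := by abel
    rw [heq] at this
    linarith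
  have h2 : 2 - 2 * δ / 3 < ‖x - y'‖ := by
    have := norm_sub_norm_le (x - y) (x - y')
    have heq : (x - y) - (x - y') = -(y - y') := by abel
    rw [heq, norm_neg] at this
    linarith
  have := hmin y' hy'norm
  rcases min_le_iff.mp this with h | h <;> linarith

lemma stmt11_sep {𝕜 : Type*} [RCLike 𝕜] {X : Type*} [NormedAddCommGroup X]
    [NormedSpace 𝕜 X] [NormedSpace ℝ X] [IsScalarTower ℝ 𝕜 X]
    {x : X} {f : X →L[𝕜] 𝕜} {D : Set X} (hmem : x ∈ closure (convexHull ℝ D))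
    {c : ℝ} (hc : c < RCLike.re (f x)) : ∃ y ∈ D, c < RCLike.re (f y) := by
  by_contra h
  push_neg at h
  have hlin : IsLinearMap ℝ (fun z : X => RCLike.re (f z)) := by
    constructor
    · intro a b; rw [map_add, map_add]
    · intro r a
      rw [f.map_smul_of_tower, RCLike.smul_re]
      rfl
  have hconv : Convex ℝ {z : X | RCLike.re (f z) ≤ c} := convex_halfSpace_le hlin c
  have hclosed : IsClosed {z : X | RCLike.re (f z) ≤ c} :=
    isClosed_le (by fun_prop) continuous_const
  have : x ∈ {z : X | RCLike.re (f z) ≤ c} :=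
    closure_minimal (convexHull_min h hconv) hclosed hmem
  exact absurd this (by simpa using hc.not_ge)

/-- Every locally uniformly nonsquare (nontrivial) Banach space
admits no Δ-points and consequently fails the DLD2P. -/
theorem stmt11 {𝕜 : Type*} [RCLike 𝕜] {X : Type*} [NormedAddCommGroup X]
    [NormedSpace 𝕜 X] [NormedSpace ℝ X] [IsScalarTower ℝ 𝕜 X] [CompleteSpace X] [Nontrivial X]
    (hlunsq : ∀ x : X, ‖x‖ = 1 → ∃ δ > (0 : ℝ), ∀ y : X, ‖y‖ = 1 →
      min ‖x + y‖ ‖x - y‖ ≤ 2 - δ) :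
    (∀ x : X, ‖x‖ = 1 →
      ¬ (∀ ε > (0 : ℝ),
        x ∈ closure (convexHull ℝ {y : X | ‖y‖ ≤ 1 ∧ 2 - ε ≤ ‖x - y‖}))) ∧
    ¬ (∀ (xs : X →L[𝕜] 𝕜), ‖xs‖ = 1 → ∀ α > (0 : ℝ), ∀ x : X, ‖x‖ = 1 →
        (‖x‖ ≤ 1 ∧ 1 - α < RCLike.re (xs x)) → ∀ ε > (0 : ℝ),
        ∃ y : X, (‖y‖ ≤ 1 ∧ 1 - α < RCLike.re (xs y)) ∧ 2 - ε ≤ ‖x - y‖) := by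
  have main : ∀ x : X, ‖x‖ = 1 →
      ¬ (∀ ε > (0 : ℝ),
        x ∈ closure (convexHull ℝ {y : X | ‖y‖ ≤ 1 ∧ 2 - ε ≤ ‖x - y‖})) := by
    intro x hx h
    obtain ⟨δ, hδ0, hδ⟩ := hlunsq x hx
    set δ' := min δ 1 with hδ'def
    have hδ'0 : 0 < δ' := lt_min hδ0 one_pos
    have hδ'1 : δ' ≤ 1 := min_le_right _ _
    have hmin : ∀ z : X, ‖z‖ = 1 → min ‖x + z‖ ‖x - z‖ ≤ 2 - δ' := fun z hz =>
      (hδ z hz).trans (by simp [hδ'def]; linarith [min_le_left δ 1])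
    obtain ⟨f, hf, hfx⟩ := exists_dual_vector 𝕜 x (by rw [← norm_ne_zero_iff, hx]; norm_num)
    have hfx' : RCLike.re (f x) = 1 := by rw [hfx, hx]; simp
    have hmem := h (δ' / 3) (by linarith)
    obtain ⟨y, ⟨hy1, hy2⟩, hfy⟩ := stmt11_sep hmem (c := 1 - δ' / 3) (by rw [hfx']; linarith)
    exact stmt11_key hx hf hδ'0 hδ'1 hmin hy1 hfy hy2 hfx'
  refine ⟨main, fun H => ?_⟩
  obtain ⟨x0, hx0⟩ := exists_ne (0 : X)
  set x : X := ‖x0‖⁻¹ • x0 with hxdef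
  have hx0n : (0:ℝ) < ‖x0‖ := norm_pos_iff.mpr hx0
  have hx : ‖x‖ = 1 := by
    rw [hxdef, norm_smul, Real.norm_eq_abs, abs_inv, abs_of_pos hx0n,
      inv_mul_cancel₀ hx0n.ne']
  obtain ⟨δ, hδ0, hδ⟩ := hlunsq x hx
  set δ' := min δ 1 with hδ'def
  have hδ'0 : 0 < δ' := lt_min hδ0 one_pos
  have hδ'1 : δ' ≤ 1 := min_le_right _ _
  have hmin : ∀ z : X, ‖z‖ = 1 → min ‖x + z‖ ‖x - z‖ ≤ 2 - δ' := fun z hz =>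
    (hδ z hz).trans (by simp [hδ'def]; linarith [min_le_left δ 1])
  obtain ⟨f, hf, hfx⟩ := exists_dual_vector 𝕜 x (by rw [← norm_ne_zero_iff, hx]; norm_num)
  have hfx' : RCLike.re (f x) = 1 := by rw [hfx, hx]; simp
  obtain ⟨y, ⟨hy1, hfy⟩, hy2⟩ := H f hf (δ' / 3) (by linarith) x hx
    ⟨hx.le, by rw [hfx']; linarith⟩ (δ' / 3) (by linarith)
  exact stmt11_key hx hf hδ'0 hδ'1 hmin hy1 hfy hy2 hfx'
end

section
/- Every strongly locally uniformly alternatively convex or smooth (sluacs) Banach space is locally uniformly nonsquare. -/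
open Filter Topology

/-- Every sluacs Banach space is locally uniformly nonsquare. -/
theorem stmt13 {𝕜 : Type*} [RCLike 𝕜] {X : Type*} [NormedAddCommGroup X]
    [NormedSpace 𝕜 X] [CompleteSpace X]
    (hsluacs : ∀ (x : X), ‖x‖ = 1 → ∀ (xn : ℕ → X) (xs : ℕ → (X →L[𝕜] 𝕜)),
      (∀ n, ‖xn n‖ = 1) → (∀ n, ‖xs n‖ = 1) →
      Tendsto (fun n => ‖xn n + x‖) atTop (𝓝 2) →
      Tendsto (fun n => RCLike.re ((xs n) (xn n))) atTop (𝓝 1) →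
      Tendsto (fun n => RCLike.re ((xs n) x)) atTop (𝓝 1)) :
    ∀ x : X, ‖x‖ = 1 → ∃ δ > (0 : ℝ), ∀ y : X, ‖y‖ = 1 →
      min ‖x + y‖ ‖x - y‖ ≤ 2 - δ := by
  intro x hx
  by_contra hcon
  push_neg at hcon
  choose y hy h2 using fun n : ℕ => hcon (1 / (n + 1)) (by positivity)
  choose f hf hfy using fun n : ℕ =>
    exists_dual_vector 𝕜 (y n) (by rw [← norm_ne_zero_iff, hy n]; norm_num)
  have hlow : Tendsto (fun n : ℕ => (2 : ℝ) - 1 / (n + 1)) atTop (𝓝 2) := by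
    have := tendsto_one_div_add_atTop_nhds_zero_nat (𝕜 := ℝ)
    simpa using (tendsto_const_nhds : Tendsto (fun _ : ℕ => (2:ℝ)) atTop (𝓝 2)).sub this
  have hplus : Tendsto (fun n => ‖y n + x‖) atTop (𝓝 2) := by
    refine tendsto_of_tendsto_of_tendsto_of_le_of_le hlow tendsto_const_nhds
      (fun n => ?_) (fun n => ?_)
    · have := (h2 n).le.trans (min_le_left _ _)
      simpa [add_comm] using this
    · calc ‖y n + x‖ ≤ ‖y n‖ + ‖x‖ := norm_add_le _ _
        _ = 2 := by rw [hy n, hx]; norm_num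
  have hminus : Tendsto (fun n => ‖-(y n) + x‖) atTop (𝓝 2) := by
    refine tendsto_of_tendsto_of_tendsto_of_le_of_le hlow tendsto_const_nhds
      (fun n => ?_) (fun n => ?_)
    · have := (h2 n).le.trans (min_le_right _ _)
      have e : ‖x - y n‖ = ‖-(y n) + x‖ := by
        rw [sub_eq_add_neg, add_comm]
      linarith [e ▸ this]
    · calc ‖-(y n) + x‖ ≤ ‖-(y n)‖ + ‖x‖ := norm_add_le _ _
        _ = 2 := by rw [norm_neg, hy n, hx]; norm_num
  have h1 : Tendsto (fun n => RCLike.re ((f n) (y n))) atTop (𝓝 1) := by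
    have he : ∀ n, RCLike.re ((f n) (y n)) = 1 := fun n => by
      rw [hfy n, hy n]; simp
    simpa [he] using (tendsto_const_nhds : Tendsto (fun _ : ℕ => (1:ℝ)) atTop (𝓝 1))
  have hA := hsluacs x hx y f hy hf hplus h1
  have hB := hsluacs x hx (fun n => -(y n)) (fun n => -(f n))
      (fun n => by rw [norm_neg]; exact hy n)
      (fun n => by rw [norm_neg]; exact hf n)
      hminus (by simpa using h1)
  have : (0 : ℝ) = 1 + 1 := by simpa using hA.add hB
  norm_num at this
end

section
/- Every alternatively convex or smooth (acs) Banach space is nonsquare: for every x, y ∈ S_X, min{‖x + y‖, ‖x − y‖} < 2. -/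
/-- Every acs Banach space is nonsquare. -/
theorem stmt14 {𝕜 : Type*} [RCLike 𝕜] {X : Type*} [NormedAddCommGroup X]
    [NormedSpace 𝕜 X] [CompleteSpace X]
    (hacs : ∀ (x y : X), ‖x‖ = 1 → ‖y‖ = 1 → ∀ xs : X →L[𝕜] 𝕜, ‖xs‖ = 1 →
      ‖x + y‖ = 2 → RCLike.re (xs x) = 1 → RCLike.re (xs y) = 1) :
    ∀ x y : X, ‖x‖ = 1 → ‖y‖ = 1 → min ‖x + y‖ ‖x - y‖ < 2 := by
  intro x y hx hy
  by_contra h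
  push_neg at h
  have h1 : ‖x + y‖ = 2 := le_antisymm
    (by calc ‖x + y‖ ≤ ‖x‖ + ‖y‖ := norm_add_le x y
          _ = 2 := by rw [hx, hy]; norm_num)
    (le_trans (le_min_iff.mp h).1 le_rfl)
  have h2 : ‖x - y‖ = 2 := le_antisymm
    (by calc ‖x - y‖ ≤ ‖x‖ + ‖y‖ := norm_sub_le x y
          _ = 2 := by rw [hx, hy]; norm_num)
    (le_trans (le_min_iff.mp h).2 le_rfl)
  have hne : x + y ≠ 0 := by
    intro h0; rw [h0, norm_zero] at h1; norm_num at h1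
  obtain ⟨xs, hxs, hval⟩ := exists_dual_vector 𝕜 (x + y) (norm_ne_zero_iff.mpr hne)
  have hre : RCLike.re (xs (x + y)) = 2 := by
    rw [hval]; simp [h1]
  rw [map_add, map_add] at hre
  have bx : RCLike.re (xs x) ≤ 1 := by
    calc RCLike.re (xs x) ≤ ‖xs x‖ := RCLike.re_le_norm _
      _ ≤ ‖xs‖ * ‖x‖ := xs.le_opNorm x
      _ = 1 := by rw [hxs, hx]; norm_num
  have by' : RCLike.re (xs y) ≤ 1 := by
    calc RCLike.re (xs y) ≤ ‖xs y‖ := RCLike.re_le_norm _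
      _ ≤ ‖xs‖ * ‖y‖ := xs.le_opNorm y
      _ = 1 := by rw [hxs, hy]; norm_num
  have hrx : RCLike.re (xs x) = 1 := by linarith
  have hry : RCLike.re (xs y) = 1 := by linarith
  have hy' : ‖(-y : X)‖ = 1 := by rw [norm_neg]; exact hy
  have h2' : ‖x + (-y)‖ = 2 := by rw [← sub_eq_add_neg]; exact h2
  have := hacs x (-y) hx hy' xs hxs h2' hrx
  rw [map_neg, map_neg] at this
  linarith
end

section
/- Every sluacs Banach space contains no Δ-points. -/
open Filter Topology

/-- Every sluacs Banach space contains no Δ-points. -/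
theorem stmt15 {𝕜 : Type*} [RCLike 𝕜] {X : Type*} [NormedAddCommGroup X]
    [NormedSpace 𝕜 X] [NormedSpace ℝ X] [IsScalarTower ℝ 𝕜 X] [CompleteSpace X]
    (hsluacs : ∀ (x : X), ‖x‖ = 1 → ∀ (xn : ℕ → X) (xs : ℕ → (X →L[𝕜] 𝕜)),
      (∀ n, ‖xn n‖ = 1) → (∀ n, ‖xs n‖ = 1) →
      Tendsto (fun n => ‖xn n + x‖) atTop (𝓝 2) →
      Tendsto (fun n => RCLike.re ((xs n) (xn n))) atTop (𝓝 1) →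
      Tendsto (fun n => RCLike.re ((xs n) x)) atTop (𝓝 1)) :
    ∀ x : X, ‖x‖ = 1 →
      ¬ (∀ ε > (0 : ℝ),
        x ∈ closure (convexHull ℝ {y : X | ‖y‖ ≤ 1 ∧ 2 - ε ≤ ‖x - y‖})) := by
  intro x hx hΔ
  have hx0 : x ≠ 0 := by
    intro h; rw [h, norm_zero] at hx; norm_num at hx
  obtain ⟨f, hf1, hfx⟩ := exists_dual_vector 𝕜 x (norm_ne_zero_iff.mpr hx0)
  rw [hx] at hfx
  have hfxre : RCLike.re (f x) = 1 := by rw [hfx]; simp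
  -- bound re (f z) ≤ ‖z‖
  have hre_le : ∀ z : X, RCLike.re (f z) ≤ ‖z‖ := by
    intro z
    calc RCLike.re (f z) ≤ ‖f z‖ := RCLike.re_le_norm _
      _ ≤ ‖f‖ * ‖z‖ := f.le_opNorm z
      _ = ‖z‖ := by rw [hf1, one_mul]
  have heps : ∀ n : ℕ, (0:ℝ) < 1 / (n + 1) := by
    intro n; positivity
  have key : ∀ n : ℕ, ∃ y : X, ‖y‖ ≤ 1 ∧ 2 - 1/(n+1) ≤ ‖x - y‖ ∧
      1 - 1/(n+1) < RCLike.re (f y) := by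
    intro n
    by_contra hcon
    push_neg at hcon
    set ε : ℝ := 1/(n+1) with hε
    have hmem := hΔ ε (heps n)
    have hsub : closure (convexHull ℝ {y : X | ‖y‖ ≤ 1 ∧ 2 - ε ≤ ‖x - y‖}) ⊆
        {z : X | RCLike.re (f z) ≤ 1 - ε} := by
      apply closure_minimal
      · apply convexHull_min
        · intro y hy
          exact hcon y hy.1 hy.2
        · exact convex_halfSpace_le
            ⟨fun a b => by simp, fun c a => by
              rw [f.map_smul_of_tower, RCLike.smul_re]; simp⟩ _
      · exact isClosed_le (RCLike.continuous_re.comp f.continuous) continuous_const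
    have := hsub hmem
    simp only [Set.mem_setOf_eq, hfxre] at this
    linarith [heps n]
  choose y hy1 hy2 hy3 using key
  have hylb : ∀ n : ℕ, 1 - 1/(n+1) < ‖y n‖ := fun n => lt_of_lt_of_le (hy3 n) (hre_le _)
  have hypos : ∀ n : ℕ, (0:ℝ) < ‖y n‖ := by
    intro n
    have h1 : (0:ℝ) ≤ 1 - 1/(n+1) := by
      rw [sub_nonneg, div_le_one (by positivity)]
      linarith [Nat.cast_nonneg (α := ℝ) n]
    linarith [hylb n]
  set xn : ℕ → X := fun n => -((‖y n‖⁻¹ : ℝ) • y n) with hxn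
  have hxn1 : ∀ n, ‖xn n‖ = 1 := by
    intro n
    simp only [hxn, norm_neg, norm_smul, norm_inv, norm_norm]
    exact inv_mul_cancel₀ (hypos n).ne'
  have htend0 : Tendsto (fun n : ℕ => 1/((n:ℝ)+1)) atTop (𝓝 0) :=
    tendsto_one_div_add_atTop_nhds_zero_nat
  -- ‖xn n + x‖ → 2
  have hnormtend : Tendsto (fun n => ‖xn n + x‖) atTop (𝓝 2) := by
    have hlb : ∀ n : ℕ, 2 - 2 * (1/(n+1)) ≤ ‖xn n + x‖ := by
      intro n
      have h1 : ‖xn n + x‖ = ‖x - (‖y n‖⁻¹ : ℝ) • y n‖ := by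
        simp only [hxn]; rw [neg_add_eq_sub]
      have h2 : ‖y n - (‖y n‖⁻¹ : ℝ) • y n‖ = 1 - ‖y n‖ := by
        have : y n - (‖y n‖⁻¹ : ℝ) • y n = (1 - ‖y n‖⁻¹ : ℝ) • y n := by
          rw [sub_smul, one_smul]
        have hinv : (1:ℝ) ≤ ‖y n‖⁻¹ := by
          nlinarith [inv_mul_cancel₀ (hypos n).ne', inv_pos.mpr (hypos n), hy1 n]
        rw [this, norm_smul, Real.norm_eq_abs, abs_of_nonpos (by linarith), neg_sub,
          sub_mul, inv_mul_cancel₀ (hypos n).ne', one_mul]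
      have h3 : ‖x - y n‖ - ‖y n - (‖y n‖⁻¹ : ℝ) • y n‖ ≤ ‖x - (‖y n‖⁻¹ : ℝ) • y n‖ := by
        have := norm_sub_norm_le (x - y n) (((‖y n‖⁻¹ : ℝ) • y n) - y n)
        have e : (x - y n) - (((‖y n‖⁻¹ : ℝ) • y n) - y n) = x - (‖y n‖⁻¹ : ℝ) • y n := by
          abel
        rw [e] at this
        rw [← norm_neg (((‖y n‖⁻¹ : ℝ) • y n) - y n)] at this
        have e2 : -(((‖y n‖⁻¹ : ℝ) • y n) - y n) = y n - (‖y n‖⁻¹ : ℝ) • y n := by abel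
        rw [e2] at this
        linarith
      rw [h1]
      have h4 : 1 - ‖y n‖ ≤ 1/(n+1) := by linarith [hylb n]
      have := hy2 n
      rw [h2] at h3
      linarith
    have hub : ∀ n : ℕ, ‖xn n + x‖ ≤ 2 := by
      intro n
      calc ‖xn n + x‖ ≤ ‖xn n‖ + ‖x‖ := norm_add_le _ _
        _ = 2 := by rw [hxn1 n, hx]; norm_num
    have hl : Tendsto (fun n : ℕ => 2 - 2 * (1/((n:ℝ)+1))) atTop (𝓝 2) := by
      have h := (tendsto_const_nhds : Tendsto (fun _ : ℕ => (2:ℝ)) atTop (𝓝 2)).sub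
        (htend0.const_mul (2:ℝ))
      simpa using h
    exact tendsto_of_tendsto_of_tendsto_of_le_of_le hl tendsto_const_nhds hlb hub
  -- re ((-f) (xn n)) → 1
  have hretend : Tendsto (fun n => RCLike.re ((-f) (xn n))) atTop (𝓝 1) := by
    have hval : ∀ n : ℕ, RCLike.re ((-f) (xn n)) = ‖y n‖⁻¹ * RCLike.re (f (y n)) := by
      intro n
      simp only [hxn, ContinuousLinearMap.neg_apply, map_neg, neg_neg,
        f.map_smul_of_tower, RCLike.smul_re, smul_eq_mul]
    have hlb : ∀ n : ℕ, 1 - 1/(n+1) ≤ RCLike.re ((-f) (xn n)) := by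
      intro n
      rw [hval n]
      have h1 : 1 - 1/(n+1) < RCLike.re (f (y n)) := hy3 n
      have h2 : (1:ℝ) ≤ ‖y n‖⁻¹ * ‖y n‖ := by
        rw [inv_mul_cancel₀ (hypos n).ne']
      have h3 : 1 - 1/((n:ℝ)+1) ≥ 0 := by
        rw [ge_iff_le, sub_nonneg, div_le_one (by positivity)]
        linarith [Nat.cast_nonneg (α := ℝ) n]
      calc (1:ℝ) - 1/(n+1) ≤ (1 - 1/(n+1)) * (‖y n‖⁻¹ * ‖y n‖) := by nlinarith
        _ = ‖y n‖⁻¹ * ((1 - 1/(n+1)) * ‖y n‖) := by ring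
        _ ≤ ‖y n‖⁻¹ * RCLike.re (f (y n)) := by
            apply mul_le_mul_of_nonneg_left _ (by positivity)
            nlinarith [hy1 n, hylb n, hy3 n]
    have hub : ∀ n : ℕ, RCLike.re ((-f) (xn n)) ≤ 1 := by
      intro n
      have := hre_le (xn n)
      rw [hxn1 n] at this
      have e : (-f) (xn n) = f (-(xn n)) := by simp
      calc RCLike.re ((-f) (xn n)) ≤ ‖xn n‖ := by
            rw [e]
            calc RCLike.re (f (-(xn n))) ≤ ‖-(xn n)‖ := hre_le _
              _ = ‖xn n‖ := norm_neg _
        _ = 1 := hxn1 n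
    have hl : Tendsto (fun n : ℕ => 1 - 1/((n:ℝ)+1)) atTop (𝓝 1) := by
      have h := (tendsto_const_nhds : Tendsto (fun _ : ℕ => (1:ℝ)) atTop (𝓝 1)).sub htend0
      simpa using h
    exact tendsto_of_tendsto_of_tendsto_of_le_of_le hl tendsto_const_nhds hlb hub
  have hmf1 : ∀ n : ℕ, ‖(fun _ : ℕ => -f) n‖ = 1 := by intro n; simp [hf1]
  have := hsluacs x hx xn (fun _ => -f) hxn1 hmf1 hnormtend hretend
  have hconst : ∀ n : ℕ, RCLike.re ((-f) x) = -1 := by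
    intro n; simp [hfx]
  have h2 : Tendsto (fun _ : ℕ => (-1:ℝ)) atTop (𝓝 1) := by
    convert this using 2; simp [hfx]
  have := tendsto_nhds_unique h2 tendsto_const_nhds
  norm_num at this
end

section
/- Let A(K, X) be a function space over a base algebra A on a compact Hausdorff space K, and suppose the Shilov boundary Γ of A has an isolated point t₀. Then A(K, X) is isometrically isomorphic to X ⊕_∞ Y, where Y is the space of restrictions of A(Γ, X) to Γ \ {t₀}. -/
/-- A closed boundary for a subalgebra `A ⊆ C(K, ℂ)`. -/
def IsClosedBoundary {K : Type*} [TopologicalSpace K] [CompactSpace K]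
    (A : Subalgebra ℂ C(K, ℂ)) (L : Set K) : Prop :=
  IsClosed L ∧ ∀ f ∈ A, ∃ t ∈ L, ‖f t‖ = ‖f‖

/-- Restriction of continuous maps to a subset, as a linear map. -/
def restrictLM {K : Type*} [TopologicalSpace K] (X : Type*)
    [NormedAddCommGroup X] [NormedSpace ℂ X] (s : Set K) :
    C(K, X) →ₗ[ℂ] C(s, X) where
  toFun f := f.restrict s
  map_add' _ _ := rfl
  map_smul' _ _ := rfl

/-- If the Shilov boundary `Γ` of the base algebra `A` of a
function space `A(K, X)` has an isolated point `t₀`, then `A(K, X)` is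
isometrically isomorphic to `X ⊕_∞ Y`, where `Y` is the space of restrictions
of elements of `A(K, X)` to `Γ \ {t₀}` (the product `X × Y` in Lean carries
the max norm, i.e. it is the `ℓ∞`-sum). -/
theorem stmt17 {K : Type*} [TopologicalSpace K] [CompactSpace K] [T2Space K]
    {X : Type*} [NormedAddCommGroup X] [NormedSpace ℂ X] [CompleteSpace X]
    (AKX : Submodule ℂ C(K, X)) (hAKXclosed : IsClosed (AKX : Set C(K, X)))
    (A : Subalgebra ℂ C(K, ℂ)) (hAclosed : IsClosed (A : Set C(K, ℂ)))
    (hsep : ∀ s t : K, s ≠ t → ∃ f ∈ A, f s ≠ f t)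
    (hbase : ∀ g : C(K, ℂ), g ∈ A ↔
      ∃ (xs : X →L[ℂ] ℂ) (f : C(K, X)), f ∈ AKX ∧ ∀ t, g t = xs (f t))
    (htensor : ∀ g ∈ A, ∀ x : X, ∀ h : C(K, X),
      (∀ t, h t = g t • x) → h ∈ AKX)
    (hmult : ∀ g ∈ A, ∀ f ∈ AKX, ∀ h : C(K, X),
      (∀ t, h t = g t • f t) → h ∈ AKX)
    (Γ : Set K) (hΓ : IsClosedBoundary A Γ)
    (hmin : ∀ L : Set K, IsClosedBoundary A L → Γ ⊆ L)
    (t₀ : K) (ht₀ : t₀ ∈ Γ)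
    (hiso : ∃ U : Set K, IsOpen U ∧ U ∩ Γ = {t₀})
    [CompactSpace (Γ \ {t₀} : Set K)] :
    Nonempty (AKX ≃ₗᵢ[ℂ]
      (X × (Submodule.map (restrictLM X (Γ \ {t₀} : Set K)) AKX))) := by
  classical
  obtain ⟨U, hUopen, hUΓ⟩ := hiso
  have ht₀U : t₀ ∈ U := by
    have : t₀ ∈ U ∩ Γ := by rw [hUΓ]; exact rfl
    exact this.1
  have hSU : (Γ \ {t₀} : Set K) = Γ \ U := by
    ext t
    constructor
    · rintro ⟨htΓ, hne⟩
      refine ⟨htΓ, fun htU => hne ?_⟩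
      have : t ∈ U ∩ Γ := ⟨htU, htΓ⟩
      rwa [hUΓ] at this
    · rintro ⟨htΓ, htU⟩
      refine ⟨htΓ, fun h => htU ?_⟩
      have ht : t = t₀ := h
      rw [ht]; exact ht₀U
  -- Step 1: for f ∈ AKX and any s, the value ‖f s‖ is dominated by some value on Γ.
  have hdom : ∀ f : C(K, X), f ∈ AKX → ∀ s : K, ∃ t ∈ Γ, ‖f s‖ ≤ ‖f t‖ := by
    intro f hf s
    by_cases h0 : f s = 0
    · exact ⟨t₀, ht₀, by simp [h0]⟩
    · obtain ⟨xs, hxs1, hxs2⟩ := exists_dual_vector ℂ (f s) (norm_ne_zero_iff.mpr h0)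
      set g : C(K, ℂ) := ⟨fun t => xs (f t), xs.continuous.comp f.continuous⟩ with hg
      have hgA : g ∈ A := (hbase g).mpr ⟨xs, f, hf, fun t => rfl⟩
      obtain ⟨t, htΓ, ht⟩ := hΓ.2 g hgA
      refine ⟨t, htΓ, ?_⟩
      have h1 : ‖f s‖ = ‖g s‖ := by
        simp [hg, hxs2]
      have h2 : ‖g s‖ ≤ ‖g t‖ := by
        rw [ht]; exact g.norm_coe_le_norm s
      have h3 : ‖g t‖ ≤ ‖f t‖ := by
        calc ‖g t‖ = ‖xs (f t)‖ := rfl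
          _ ≤ ‖xs‖ * ‖f t‖ := xs.le_opNorm _
          _ = ‖f t‖ := by rw [hxs1, one_mul]
      linarith
  -- Step 2: construct ψ ∈ A with ψ t₀ = 1 and ψ = 0 on Γ \ {t₀}.
  have hψ : ∃ ψ : C(K, ℂ), ψ ∈ A ∧ ψ t₀ = 1 ∧ ∀ t ∈ (Γ \ {t₀} : Set K), ψ t = 0 := by
    by_cases hne : (Γ \ {t₀} : Set K).Nonempty
    · -- Γ \ {t₀} is closed and not a boundary
      have hclosed : IsClosed (Γ \ {t₀} : Set K) := by
        rw [hSU]; exact hΓ.1.sdiff hUopen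
      have hnb : ¬ IsClosedBoundary A (Γ \ {t₀} : Set K) := by
        intro hb
        have := hmin _ hb ht₀
        exact this.2 rfl
      have hex : ∃ f ∈ A, ∀ t ∈ (Γ \ {t₀} : Set K), ‖f t‖ ≠ ‖f‖ := by
        by_contra hc
        push_neg at hc
        exact hnb ⟨hclosed, fun f hf => hc f hf⟩
      obtain ⟨f, hfA, hfne⟩ := hex
      obtain ⟨t₁, ht₁Γ, ht₁⟩ := hΓ.2 f hfA
      have hfnorm : 0 < ‖f‖ := by
        obtain ⟨s, hs⟩ := hne
        rcases (norm_nonneg f).lt_or_eq with h | h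
        · exact h
        · exfalso
          apply hfne s hs
          have : ‖f s‖ ≤ ‖f‖ := f.norm_coe_le_norm s
          have h0 : ‖f s‖ = 0 := le_antisymm (by rw [← h] at this; exact this) (norm_nonneg _)
          rw [h0, ← h]
      have ht₁t₀ : t₁ = t₀ := by
        by_contra hne'
        exact hfne t₁ ⟨ht₁Γ, hne'⟩ ht₁
      rw [ht₁t₀] at ht₁
      have hft₀ : f t₀ ≠ 0 := by
        intro h
        rw [h, norm_zero] at ht₁
        exact hfnorm.ne ht₁
      set φ : C(K, ℂ) := (f t₀)⁻¹ • f with hφdef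
      have hφA : φ ∈ A := A.smul_mem hfA _
      have hφt₀ : φ t₀ = 1 := by
        simp [hφdef, inv_mul_cancel₀ hft₀]
      have hφlt : ∀ t ∈ (Γ \ {t₀} : Set K), ‖φ t‖ < 1 := by
        intro t ht
        have h1 : ‖f t‖ < ‖f‖ := lt_of_le_of_ne (f.norm_coe_le_norm t) (hfne t ht)
        have heq : ‖φ t‖ = ‖f t‖ / ‖f‖ := by
          rw [hφdef]
          simp only [ContinuousMap.smul_apply, smul_eq_mul, norm_mul, norm_inv, ht₁]
          rw [div_eq_inv_mul]
        rw [heq, div_lt_one hfnorm]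
        exact h1
      -- find the max of ‖φ‖ on the compact set Γ \ {t₀}
      have hScompact : IsCompact (Γ \ {t₀} : Set K) := isCompact_iff_compactSpace.mpr ‹_›
      obtain ⟨m, hmS, hmax⟩ := hScompact.exists_isMaxOn hne
        (Continuous.continuousOn φ.continuous.norm)
      set c : ℝ := ‖φ m‖ with hc
      have hc0 : 0 ≤ c := norm_nonneg _
      have hc1 : c < 1 := hφlt m hmS
      have hble : ∀ t ∈ (Γ \ {t₀} : Set K), ‖φ t‖ ≤ c := fun t ht => hmax ht
      -- the powers of φ form a Cauchy sequence
      have hpow : ∀ n : ℕ, ∀ t ∈ (Γ \ {t₀} : Set K), ‖(φ ^ n) t‖ ≤ c ^ n := by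
        intro n t ht
        have : (φ ^ n) t = (φ t) ^ n := by simp
        rw [this, norm_pow]
        exact pow_le_pow_left₀ (norm_nonneg _) (hble t ht) n
      have hpowt₀ : ∀ n : ℕ, (φ ^ n) t₀ = 1 := by
        intro n
        have : (φ ^ n) t₀ = (φ t₀) ^ n := by simp
        rw [this, hφt₀, one_pow]
      have hcauchy : CauchySeq (fun n => φ ^ n) := by
        apply cauchySeq_of_le_geometric c 2 hc1
        intro n
        rw [dist_eq_norm]
        have hmem : φ ^ n - φ ^ (n + 1) ∈ A := A.sub_mem (A.pow_mem hφA n) (A.pow_mem hφA (n+1))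
        obtain ⟨t, htΓ, ht⟩ := hΓ.2 _ hmem
        rw [← ht]
        by_cases htt : t = t₀
        · subst htt
          simp only [ContinuousMap.sub_apply, hpowt₀, sub_self, norm_zero]
          positivity
        · have htS : t ∈ (Γ \ {t₀} : Set K) := ⟨htΓ, htt⟩
          calc ‖(φ ^ n - φ ^ (n+1)) t‖ = ‖(φ ^ n) t - (φ ^ (n+1)) t‖ := rfl
            _ ≤ ‖(φ ^ n) t‖ + ‖(φ ^ (n+1)) t‖ := norm_sub_le _ _
            _ ≤ c ^ n + c ^ (n + 1) := add_le_add (hpow n t htS) (hpow (n+1) t htS)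
            _ ≤ c ^ n + c ^ n := by
                have : c ^ (n+1) ≤ c ^ n := pow_le_pow_of_le_one hc0 hc1.le (by omega)
                linarith
            _ = 2 * c ^ n := by ring
      obtain ⟨ψ, hψlim⟩ := cauchySeq_tendsto_of_complete hcauchy
      refine ⟨ψ, ?_, ?_, ?_⟩
      · exact hAclosed.mem_of_tendsto hψlim
          (Filter.Eventually.of_forall fun n => A.pow_mem hφA n)
      · have h1 : Filter.Tendsto (fun n => (φ ^ n) t₀) Filter.atTop (nhds (ψ t₀)) :=
          ((continuous_eval_const t₀).tendsto ψ).comp hψlim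
        have h2 : Filter.Tendsto (fun n => (φ ^ n) t₀) Filter.atTop (nhds 1) := by
          simp only [hpowt₀]
          exact tendsto_const_nhds
        exact tendsto_nhds_unique h1 h2
      · intro t htS
        have h1 : Filter.Tendsto (fun n => (φ ^ n) t) Filter.atTop (nhds (ψ t)) :=
          ((continuous_eval_const t).tendsto ψ).comp hψlim
        have h2 : Filter.Tendsto (fun n => (φ ^ n) t) Filter.atTop (nhds 0) := by
          have : (fun n => (φ ^ n) t) = fun n => (φ t) ^ n := by
            funext n; simp
          rw [this]
          exact tendsto_pow_atTop_nhds_zero_of_norm_lt_one (hφlt t htS)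
        exact tendsto_nhds_unique h1 h2
    · refine ⟨1, A.one_mem, rfl, fun t ht => absurd ⟨t, ht⟩ hne⟩
  obtain ⟨ψ, hψA, hψt₀, hψ0⟩ := hψ
  -- the linear isometry
  set Y := Submodule.map (restrictLM X (Γ \ {t₀} : Set K)) AKX with hY
  have hcoe : ∀ (f : C(K, X)) (t : (Γ \ {t₀} : Set K)),
      (restrictLM X (Γ \ {t₀} : Set K) f) t = f t := fun _ _ => rfl
  set T : AKX →ₗᵢ[ℂ] X × Y :=
    { toFun := fun f => (f.1 t₀, ⟨restrictLM X (Γ \ {t₀} : Set K) f.1, ⟨f.1, f.2, rfl⟩⟩)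
      map_add' := fun f g => Prod.ext rfl (Subtype.ext rfl)
      map_smul' := fun c f => Prod.ext rfl (Subtype.ext rfl)
      norm_map' := fun f => by
        rw [Prod.norm_def]
        apply le_antisymm
        · apply max_le
          · exact (f : C(K, X)).norm_coe_le_norm t₀
          · rw [Submodule.coe_norm]
            apply ContinuousMap.norm_le _ (norm_nonneg _) |>.mpr
            intro t
            exact (f : C(K, X)).norm_coe_le_norm t
        · apply ContinuousMap.norm_le _ (le_max_of_le_left (norm_nonneg _)) |>.mpr
          intro s
          obtain ⟨t, htΓ, hts⟩ := hdom f.1 f.2 s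
          by_cases htt : t = t₀
          · subst htt
            exact le_max_of_le_left hts
          · apply le_max_of_le_right
            rw [Submodule.coe_norm]
            calc ‖(f : C(K, X)) s‖ ≤ ‖(f : C(K, X)) t‖ := hts
              _ = ‖(restrictLM X (Γ \ {t₀} : Set K) f.1) ⟨t, htΓ, htt⟩‖ := rfl
              _ ≤ _ := (restrictLM X (Γ \ {t₀} : Set K) f.1).norm_coe_le_norm _ }
  have hTsurj : Function.Surjective T := by
    rintro ⟨x, y⟩
    obtain ⟨g, hgAKX, hgy⟩ := y.2
    set h₁ : C(K, X) := ⟨fun t => ψ t • x, ψ.continuous.smul continuous_const⟩ with hh₁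
    set h₂ : C(K, X) := ⟨fun t => (1 - ψ t) • g t, (continuous_const.sub ψ.continuous).smul g.continuous⟩ with hh₂
    have hm₁ : h₁ ∈ AKX := htensor ψ hψA x h₁ fun t => rfl
    have hm₂ : h₂ ∈ AKX := by
      apply hmult (1 - ψ) (A.sub_mem A.one_mem hψA) g hgAKX h₂
      intro t
      simp [hh₂]
    refine ⟨⟨h₁ + h₂, AKX.add_mem hm₁ hm₂⟩, ?_⟩
    have hval : ∀ t : K, (h₁ + h₂) t = ψ t • x + (1 - ψ t) • g t := fun t => rfl
    have h1 : (h₁ + h₂) t₀ = x := by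
      rw [hval, hψt₀]
      simp
    have h2 : restrictLM X (Γ \ {t₀} : Set K) (h₁ + h₂) = (y : C((Γ \ {t₀} : Set K), X)) := by
      rw [← hgy]
      ext t
      rw [hcoe, hcoe, hval]
      rw [hψ0 t t.2]
      simp
    exact Prod.ext h1 (Subtype.ext h2)
  exact ⟨LinearIsometryEquiv.ofSurjective T hTsurj⟩
end
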